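/- arXiv:2310.12276 — 8 statements merged into one kernel-verified Lean document; each statement's English description precedes it below -/
import Mathlib

section
/- Let k ≥ 1, let F : C([0,1]^k, ℝ) → C([0,1]^k, ℝ) be a linear map, let D be a bounded linear operator on C([0,1]^k, ℝ), and let a ∈ [0,1) be such that ‖Fh − h‖∞ ≤ a·‖Fh − Dh‖∞ for every h ∈ C([0,1]^k, ℝ). Then F is a bounded linear operator and ‖Ff‖∞ ≤ (1 + a·‖Id − D‖/(1−a))·‖f‖∞ for every f ∈ C([0,1]^k, ℝ); in particular the operator norm satisfies ‖F‖ ≤ 1 + a·‖Id − D‖/(1−a). (Paper's Theorem 3.3 for the fractal operator F = F^α_{Δ,D}, whose defining property is ‖Ff − f‖∞ ≤ ‖α‖∞·‖Ff − Df‖∞ with a = ‖α‖∞ < 1.) -/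
/-- Paper's Theorem 3.3: the fractal operator `F = F^α_{Δ,D}` (a linear map whose defining
property is `‖Fh − h‖∞ ≤ a·‖Fh − Dh‖∞` with `a = ‖α‖∞ < 1`) is a bounded linear operator
with `‖F‖ ≤ 1 + a·‖Id − D‖/(1−a)`. -/
theorem fractal_operator_bounded (k : ℕ) (hk : 1 ≤ k)
    (F : C((Fin k → Set.Icc (0:ℝ) 1), ℝ) →ₗ[ℝ] C((Fin k → Set.Icc (0:ℝ) 1), ℝ))
    (D : C((Fin k → Set.Icc (0:ℝ) 1), ℝ) →L[ℝ] C((Fin k → Set.Icc (0:ℝ) 1), ℝ))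
    (a : ℝ) (ha : a ∈ Set.Ico (0:ℝ) 1)
    (hF : ∀ h : C((Fin k → Set.Icc (0:ℝ) 1), ℝ), ‖F h - h‖ ≤ a * ‖F h - D h‖) :
    (∀ f : C((Fin k → Set.Icc (0:ℝ) 1), ℝ),
      ‖F f‖ ≤ (1 + a * ‖ContinuousLinearMap.id ℝ C((Fin k → Set.Icc (0:ℝ) 1), ℝ) - D‖ / (1 - a)) * ‖f‖) ∧
    ∃ F' : C((Fin k → Set.Icc (0:ℝ) 1), ℝ) →L[ℝ] C((Fin k → Set.Icc (0:ℝ) 1), ℝ),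
      (∀ f, F' f = F f) ∧
      ‖F'‖ ≤ 1 + a * ‖ContinuousLinearMap.id ℝ C((Fin k → Set.Icc (0:ℝ) 1), ℝ) - D‖ / (1 - a) := by
  obtain ⟨ha0, ha1⟩ := ha
  set X := C((Fin k → Set.Icc (0:ℝ) 1), ℝ)
  set I := ContinuousLinearMap.id ℝ X
  have h1a : (0:ℝ) < 1 - a := by linarith
  have hIDnn : (0:ℝ) ≤ ‖I - D‖ := ContinuousLinearMap.opNorm_nonneg _
  set C : ℝ := 1 + a * ‖I - D‖ / (1 - a) with hC
  have hCnn : (0:ℝ) ≤ C := by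
    rw [hC]; positivity
  have key : ∀ f : X, ‖F f‖ ≤ C * ‖f‖ := by
    intro f
    have h2 : ‖F f - f‖ ≤ a * (‖F f - f‖ + ‖f - D f‖) := by
      calc ‖F f - f‖ ≤ a * ‖F f - D f‖ := hF f
        _ ≤ a * (‖F f - f‖ + ‖f - D f‖) := by
            apply mul_le_mul_of_nonneg_left _ ha0
            calc ‖F f - D f‖ = ‖(F f - f) + (f - D f)‖ := by ring_nf
              _ ≤ ‖F f - f‖ + ‖f - D f‖ := norm_add_le _ _
    have h3 : ‖F f - f‖ ≤ a / (1 - a) * ‖f - D f‖ := by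
      rw [div_mul_eq_mul_div, le_div_iff₀ h1a]
      nlinarith [norm_nonneg (F f - f), norm_nonneg (f - D f)]
    have h4 : ‖f - D f‖ ≤ ‖I - D‖ * ‖f‖ := by
      have := (I - D).le_opNorm f
      simpa [I] using this
    have h5 : ‖F f‖ ≤ ‖f‖ + ‖F f - f‖ := by
      have := norm_add_le (F f - f) f
      simpa [sub_add_cancel, add_comm] using this
    have h6 : a / (1 - a) * ‖f - D f‖ ≤ a / (1 - a) * (‖I - D‖ * ‖f‖) := by
      apply mul_le_mul_of_nonneg_left h4
      positivity
    calc ‖F f‖ ≤ ‖f‖ + ‖F f - f‖ := h5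
      _ ≤ ‖f‖ + a / (1 - a) * (‖I - D‖ * ‖f‖) := by linarith
      _ = C * ‖f‖ := by rw [hC]; ring
  refine ⟨key, F.mkContinuous C key, fun f => rfl, ?_⟩
  exact (F.mkContinuous C key).opNorm_le_bound hCnn key
end

section
/- Let k ≥ 1, let F and D be bounded linear operators on C([0,1]^k, ℝ), and let a ∈ [0,1) be such that ‖Fh − h‖∞ ≤ a·‖Fh − Dh‖∞ for every h ∈ C([0,1]^k, ℝ). If a·(1 + ‖Id − D‖) < 1, then F is bijective with bounded (continuous) inverse, i.e. F is a topological automorphism of C([0,1]^k, ℝ), and moreover ‖F⁻¹g‖∞ ≤ ((1 + a)/(1 − a·‖D‖))·‖g‖∞ for every g ∈ C([0,1]^k, ℝ). (Paper's Corollary 3.6 for the fractal operator F = F^α_{Δ,D} with a = ‖α‖∞ < (1 + ‖Id − D‖)⁻¹.) -/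
set_option maxHeartbeats 1000000 in
/-- Paper's Corollary 3.6: if `a·(1 + ‖Id − D‖) < 1` then the fractal operator `F` is a
topological automorphism of `C([0,1]^k, ℝ)`, with `‖F⁻¹g‖∞ ≤ ((1+a)/(1 − a·‖D‖))·‖g‖∞`. -/
theorem fractal_operator_automorphism (k : ℕ) (hk : 1 ≤ k)
    (F D : C((Fin k → Set.Icc (0:ℝ) 1), ℝ) →L[ℝ] C((Fin k → Set.Icc (0:ℝ) 1), ℝ))
    (a : ℝ) (ha : a ∈ Set.Ico (0:ℝ) 1)
    (hF : ∀ h : C((Fin k → Set.Icc (0:ℝ) 1), ℝ), ‖F h - h‖ ≤ a * ‖F h - D h‖)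
    (haD : a * (1 + ‖ContinuousLinearMap.id ℝ C((Fin k → Set.Icc (0:ℝ) 1), ℝ) - D‖) < 1) :
    Function.Bijective F ∧
    ∃ G : C((Fin k → Set.Icc (0:ℝ) 1), ℝ) →L[ℝ] C((Fin k → Set.Icc (0:ℝ) 1), ℝ),
      (∀ g, F (G g) = g) ∧ (∀ g, G (F g) = g) ∧
      ∀ g : C((Fin k → Set.Icc (0:ℝ) 1), ℝ), ‖G g‖ ≤ (1 + a) / (1 - a * ‖D‖) * ‖g‖ := by
  set E := C((Fin k → Set.Icc (0:ℝ) 1), ℝ)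
  set I := ContinuousLinearMap.id ℝ E with hI
  obtain ⟨ha0, ha1⟩ := ha
  have hIDnn : (0:ℝ) ≤ ‖I - D‖ := ContinuousLinearMap.opNorm_nonneg _
  have h1a : (0:ℝ) < 1 - a := by linarith
  -- pointwise bound on Id - F
  have hkey : ∀ h : E, ‖F h - h‖ ≤ a * ‖I - D‖ / (1 - a) * ‖h‖ := by
    intro h
    have h2 : ‖F h - D h‖ ≤ ‖F h - h‖ + ‖I - D‖ * ‖h‖ := by
      have : F h - D h = (F h - h) + (h - D h) := by abel
      rw [this]
      refine (norm_add_le _ _).trans ?_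
      have : h - D h = (I - D) h := by simp [I]
      rw [this]
      exact add_le_add le_rfl ((I - D).le_opNorm h)
    have h3 := (hF h).trans (mul_le_mul_of_nonneg_left h2 ha0)
    rw [div_mul_eq_mul_div, le_div_iff₀ h1a]
    nlinarith [norm_nonneg (F h - h)]
  have hcnn : (0:ℝ) ≤ a * ‖I - D‖ / (1 - a) := by positivity
  have hop : ‖I - F‖ ≤ a * ‖I - D‖ / (1 - a) := by
    refine ContinuousLinearMap.opNorm_le_bound _ hcnn fun h => ?_
    have : (I - F) h = -(F h - h) := by simp [I]
    rw [this, norm_neg]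
    exact hkey h
  have hclt : a * ‖I - D‖ / (1 - a) < 1 := by
    rw [div_lt_one h1a]; nlinarith
  have hnorm : ‖I - F‖ < 1 := lt_of_le_of_lt hop hclt
  -- F = 1 - (1 - F) is a unit
  have hI1 : (I : E →L[ℝ] E) = 1 := rfl
  have hnorm' : ‖(1 : E →L[ℝ] E) - F‖ < 1 := by rwa [← hI1]
  let u : (E →L[ℝ] E)ˣ := Units.oneSub ((1 : E →L[ℝ] E) - F) hnorm'
  have hu : (u : E →L[ℝ] E) = F := sub_sub_cancel 1 F
  set G : E →L[ℝ] E := ↑u⁻¹ with hG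
  have hFG : ∀ g, F (G g) = g := by
    intro g
    have h0 : ((u : E →L[ℝ] E) * ↑u⁻¹) g = (1 : E →L[ℝ] E) g :=
      DFunLike.congr_fun u.mul_inv g
    simpa [hu, ContinuousLinearMap.mul_apply] using h0
  have hGF : ∀ g, G (F g) = g := by
    intro g
    have h0 : ((↑u⁻¹ : E →L[ℝ] E) * ↑u) g = (1 : E →L[ℝ] E) g :=
      DFunLike.congr_fun u.inv_mul g
    simpa [hu, ContinuousLinearMap.mul_apply] using h0
  have hbij : Function.Bijective F :=
    ⟨Function.LeftInverse.injective hGF, Function.RightInverse.surjective hFG⟩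
  refine ⟨hbij, G, hFG, hGF, ?_⟩
  -- norm bound
  have hDle : ‖D‖ ≤ 1 + ‖I - D‖ := by
    refine ContinuousLinearMap.opNorm_le_bound _ (by positivity) fun h => ?_
    have hD : D h = h - (I - D) h := by simp [I]
    calc ‖D h‖ = ‖h - (I - D) h‖ := by rw [← hD]
      _ ≤ ‖h‖ + ‖(I - D) h‖ := norm_sub_le _ _
      _ ≤ ‖h‖ + ‖I - D‖ * ‖h‖ := by
          exact add_le_add le_rfl ((I - D).le_opNorm h)
      _ = (1 + ‖I - D‖) * ‖h‖ := by ring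
  have haDpos : (0:ℝ) < 1 - a * ‖D‖ := by nlinarith [norm_nonneg D]
  intro g
  set h := G g with hh
  have hFh : F h = g := hFG g
  have h2 : ‖F h - D h‖ ≤ ‖g‖ + ‖D‖ * ‖h‖ := by
    refine (norm_sub_le _ _).trans ?_
    rw [hFh]
    exact add_le_add le_rfl (D.le_opNorm h)
  have h3 := (hF h).trans (mul_le_mul_of_nonneg_left h2 ha0)
  have h4 : ‖h‖ ≤ ‖g‖ + ‖F h - h‖ := by
    have : h = F h - (F h - h) := by abel
    calc ‖h‖ = ‖F h - (F h - h)‖ := by rw [← this]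
      _ ≤ ‖F h‖ + ‖F h - h‖ := norm_sub_le _ _
      _ = ‖g‖ + ‖F h - h‖ := by rw [hFh]
  rw [div_mul_eq_mul_div, le_div_iff₀ haDpos]
  nlinarith [norm_nonneg g]
end

section
/- Let k ≥ 1 and, for each q ∈ {1,…,k}, fix a partition 0 = x_{q,0} < x_{q,1} < ⋯ < x_{q,N_q} = 1 of [0,1] with N_q ≥ 1, and let v_{q,j} : [0,1] → [x_{q,j−1}, x_{q,j}] (1 ≤ j ≤ N_q) be the affine homeomorphisms determined by v_{q,j}(0) = x_{q,j−1}, v_{q,j}(1) = x_{q,j} when j is odd and v_{q,j}(0) = x_{q,j}, v_{q,j}(1) = x_{q,j−1} when j is even. Let f, s, α ∈ C([0,1]^k, ℝ) with ‖α‖∞ < 1 and with s(P) = f(P) at every corner grid point P = (x_{1,i_1},…,x_{k,i_k}) with i_q ∈ {0, N_q} for all q. Then there exists a unique continuous function g : [0,1]^k → ℝ satisfying the self-referential equation g(x₁,…,x_k) = f(x₁,…,x_k) + α(x₁,…,x_k)·[ g(v_{1,j₁}⁻¹(x₁),…,v_{k,j_k}⁻¹(x_k)) − s(v_{1,j₁}⁻¹(x₁),…,v_{k,j_k}⁻¹(x_k))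 ] for every index tuple (j₁,…,j_k) with 1 ≤ j_q ≤ N_q and every (x₁,…,x_k) ∈ ∏_{q=1}^k [x_{q,j_q−1}, x_{q,j_q}]; moreover g(x_{1,j_1},…,x_{k,j_k}) = f(x_{1,j_1},…,x_{k,j_k}) at every grid point, i.e. for all indices with 0 ≤ j_q ≤ N_q. (Paper's existence theorem for the multivariate α-fractal function f^α_{Δ,s}.) -/
open Finset

/-- Inverse affine map of the `i`-th cell. -/
noncomputable def Lfun (X : ℕ → ℝ) (i : ℕ) (y : ℝ) : ℝ :=
  if i % 2 = 0 then (y - X i) / (X (i+1) - X i) else (X (i+1) - y) / (X (i+1) - X i)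

/-- Piecewise-defined global inverse map. -/
noncomputable def wfun (X : ℕ → ℝ) (n : ℕ) (y : ℝ) : ℝ :=
  ∑ m ∈ range n,
    if m = 0 then Lfun X 0 y else if X m ≤ y then Lfun X m y - Lfun X (m-1) y else 0

section scalar

variable {X : ℕ → ℝ} {n : ℕ}

lemma Xmono (hmono : ∀ i j : ℕ, i < j → j ≤ n → X i < X j) :
    ∀ m i : ℕ, m ≤ i → i ≤ n → X m ≤ X i := by
  intro m i hmi hin
  rcases eq_or_lt_of_le hmi with h | h
  · rw [h]
  · exact (hmono m i h hin).le

lemma Lfun_left (hmono : ∀ i j : ℕ, i < j → j ≤ n → X i < X j) {i : ℕ} (hi : i < n) :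
    Lfun X i (X i) = if i % 2 = 0 then 0 else 1 := by
  have hd : X i < X (i+1) := hmono i (i+1) (by omega) (by omega)
  unfold Lfun
  split <;> [simp; skip]
  rw [div_self (by linarith)]

lemma Lfun_right (hmono : ∀ i j : ℕ, i < j → j ≤ n → X i < X j) {i : ℕ} (hi : i < n) :
    Lfun X i (X (i+1)) = if i % 2 = 0 then 1 else 0 := by
  have hd : X i < X (i+1) := hmono i (i+1) (by omega) (by omega)
  unfold Lfun
  split <;> [rw [div_self (by linarith)]; simp]

lemma Lfun_junction (hmono : ∀ i j : ℕ, i < j → j ≤ n → X i < X j) {m : ℕ}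
    (hm : 1 ≤ m) (hmn : m < n) : Lfun X m (X m) = Lfun X (m-1) (X m) := by
  have h1 : Lfun X m (X m) = if m % 2 = 0 then 0 else 1 := Lfun_left hmono hmn
  have h2 : Lfun X (m-1) (X ((m-1)+1)) = if (m-1) % 2 = 0 then 1 else 0 :=
    Lfun_right hmono (by omega)
  rw [show (m-1)+1 = m by omega] at h2
  rw [h1, h2]
  rcases Nat.mod_two_eq_zero_or_one m with h | h
  · rw [if_pos h, if_neg (by omega)]
  · rw [if_neg (by omega), if_pos (by omega)]

lemma sum_tele (i : ℕ) (y : ℝ) (h : ∀ m, m ≤ i → X m ≤ y) :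
    (∑ m ∈ range (i+1),
      if m = 0 then Lfun X 0 y else if X m ≤ y then Lfun X m y - Lfun X (m-1) y else 0)
      = Lfun X i y := by
  induction i with
  | zero => simp
  | succ i ih =>
    rw [Finset.sum_range_succ, ih (fun m hm => h m (by omega)), if_neg (by omega),
      if_pos (h _ le_rfl), show i+1-1 = i by omega]
    ring

lemma wfun_eq (hmono : ∀ i j : ℕ, i < j → j ≤ n → X i < X j) {i : ℕ} {y : ℝ}
    (hi : i < n) (h1 : X i ≤ y) (h2 : y ≤ X (i+1)) : wfun X n y = Lfun X i y := by
  unfold wfun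
  rw [← Finset.sum_range_add_sum_Ico _ (show i+1 ≤ n by omega),
    sum_tele i y (fun m hm => le_trans (Xmono hmono m i hm (by omega)) h1)]
  have hz : (∑ m ∈ Ico (i+1) n,
      if m = 0 then Lfun X 0 y else if X m ≤ y then Lfun X m y - Lfun X (m-1) y else 0) = 0 := by
    apply Finset.sum_eq_zero
    intro m hm
    rw [Finset.mem_Ico] at hm
    rw [if_neg (by omega)]
    by_cases hc : X m ≤ y
    · rw [if_pos hc]
      have hm1 : m = i + 1 := by
        by_contra hne
        have : X (i+1) < X m := hmono (i+1) m (by omega) (by omega)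
        linarith
      subst hm1
      have hy : y = X (i+1) := le_antisymm h2 hc
      rw [show i+1-1 = i from by omega, sub_eq_zero, hy]
      have hj := Lfun_junction hmono (m := i+1) (by omega) (by omega)
      rwa [show i+1-1 = i from by omega] at hj
    · rw [if_neg hc]
  rw [hz, add_zero]

lemma Lfun_cont (i : ℕ) : Continuous (Lfun X i) := by
  unfold Lfun
  split <;> fun_prop

lemma wfun_cont (hmono : ∀ i j : ℕ, i < j → j ≤ n → X i < X j) :
    Continuous (wfun X n) := by
  unfold wfun
  apply continuous_finset_sum
  intro m hm
  rw [Finset.mem_range] at hm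
  by_cases h0 : m = 0
  · simpa [h0] using Lfun_cont (X := X) 0
  · simp only [if_neg h0]
    exact Continuous.if_le ((Lfun_cont m).sub (Lfun_cont (m-1))) continuous_const
      continuous_const continuous_id (fun y hy => by
        rw [← hy, Lfun_junction hmono (by omega) hm]; ring)

lemma exists_cell (hn : 1 ≤ n) (hX0 : X 0 = 0) (hXn : X n = 1)
    (hmono : ∀ i j : ℕ, i < j → j ≤ n → X i < X j) {y : ℝ} (hy : y ∈ Set.Icc (0:ℝ) 1) :
    ∃ i, i < n ∧ X i ≤ y ∧ y ≤ X (i+1) := by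
  classical
  set Sf := (range n).filter (fun i => X i ≤ y) with hSf
  have h0 : 0 ∈ Sf :=
    Finset.mem_filter.2 ⟨Finset.mem_range.2 (by omega), by rw [hX0]; exact hy.1⟩
  have hne : Sf.Nonempty := ⟨0, h0⟩
  have hmem := Finset.mem_filter.1 (Sf.max'_mem hne)
  have hilt : Sf.max' hne < n := Finset.mem_range.1 hmem.1
  refine ⟨Sf.max' hne, hilt, hmem.2, ?_⟩
  set i := Sf.max' hne with hi
  by_cases hc : i + 1 = n
  · rw [hc, hXn]; exact hy.2
  · by_contra hlt
    push_neg at hlt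
    have hin : i + 1 ∈ Sf :=
      Finset.mem_filter.2 ⟨Finset.mem_range.2 (by omega), hlt.le⟩
    have := Sf.le_max' _ hin
    omega

lemma Lfun_mem (hmono : ∀ i j : ℕ, i < j → j ≤ n → X i < X j) {i : ℕ} {y : ℝ}
    (hi : i < n) (h1 : X i ≤ y) (h2 : y ≤ X (i+1)) : Lfun X i y ∈ Set.Icc (0:ℝ) 1 := by
  have hd : X i < X (i+1) := hmono i (i+1) (by omega) (by omega)
  unfold Lfun
  split <;> constructor
  · exact div_nonneg (by linarith) (by linarith)
  · rw [div_le_one (by linarith)]; linarith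
  · exact div_nonneg (by linarith) (by linarith)
  · rw [div_le_one (by linarith)]; linarith

lemma wfun_mem (hn : 1 ≤ n) (hX0 : X 0 = 0) (hXn : X n = 1)
    (hmono : ∀ i j : ℕ, i < j → j ≤ n → X i < X j) {y : ℝ} (hy : y ∈ Set.Icc (0:ℝ) 1) :
    wfun X n y ∈ Set.Icc (0:ℝ) 1 := by
  obtain ⟨i, hi, h1, h2⟩ := exists_cell hn hX0 hXn hmono hy
  rw [wfun_eq hmono hi h1 h2]
  exact Lfun_mem hmono hi h1 h2

lemma wfun_grid (hn : 1 ≤ n) (hmono : ∀ i j : ℕ, i < j → j ≤ n → X i < X j) {i : ℕ}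
    (hi : i ≤ n) : wfun X n (X i) = 0 ∨ wfun X n (X i) = 1 := by
  by_cases h0 : i = 0
  · subst h0
    rw [wfun_eq hmono hn le_rfl (Xmono hmono 0 1 (by omega) hn), Lfun_left hmono hn]
    simp
  · have h1 : 1 ≤ i := by omega
    have hkey : wfun X n (X i) = Lfun X (i-1) (X i) := by
      have := wfun_eq hmono (show i - 1 < n by omega)
        (Xmono hmono (i-1) i (by omega) hi) (by rw [show i-1+1 = i by omega])
      exact this
    rw [hkey, show (X i) = X ((i-1)+1) by rw [show i-1+1 = i by omega],
      Lfun_right hmono (by omega)]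
    split
    · right; rfl
    · left; rfl

lemma wfun_V (hmono : ∀ i j : ℕ, i < j → j ≤ n → X i < X j) {i : ℕ} {t : ℝ}
    (hi : i < n) (ht : t ∈ Set.Icc (0:ℝ) 1) :
    wfun X n (if i % 2 = 0 then X i + t * (X (i+1) - X i)
      else X (i+1) + t * (X i - X (i+1))) = t := by
  have hd : X i < X (i+1) := hmono i (i+1) (by omega) (by omega)
  obtain ⟨ht0, ht1⟩ := ht
  set y := (if i % 2 = 0 then X i + t * (X (i+1) - X i)
      else X (i+1) + t * (X i - X (i+1))) with hy
  have h1 : X i ≤ y := by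
    rw [hy]; split <;> nlinarith
  have h2 : y ≤ X (i+1) := by
    rw [hy]; split <;> nlinarith
  have hne : X (i+1) - X i ≠ 0 := by linarith
  rw [wfun_eq hmono hi h1 h2]
  unfold Lfun
  rw [hy]
  by_cases hc : i % 2 = 0
  · rw [if_pos hc, if_pos hc]; field_simp [hne]; ring
  · rw [if_neg hc, if_neg hc]; field_simp [hne]; ring

lemma exists_V (hn : 1 ≤ n) (hX0 : X 0 = 0) (hXn : X n = 1)
    (hmono : ∀ i j : ℕ, i < j → j ≤ n → X i < X j) {y : ℝ} (hy : y ∈ Set.Icc (0:ℝ) 1) :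
    ∃ i, i < n ∧ ∃ t, t ∈ Set.Icc (0:ℝ) 1 ∧
      (if i % 2 = 0 then X i + t * (X (i+1) - X i)
        else X (i+1) + t * (X i - X (i+1))) = y := by
  obtain ⟨i, hi, h1, h2⟩ := exists_cell hn hX0 hXn hmono hy
  have hd : X i < X (i+1) := hmono i (i+1) (by omega) (by omega)
  have hne : X (i+1) - X i ≠ 0 := by linarith
  refine ⟨i, hi, Lfun X i y, Lfun_mem hmono hi h1 h2, ?_⟩
  unfold Lfun
  by_cases hc : i % 2 = 0
  · rw [if_pos hc, if_pos hc]; field_simp [hne]; ring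
  · rw [if_neg hc, if_neg hc]; field_simp [hne]; ring

end scalar


/-- Existence and uniqueness of the multivariate α-fractal function `f^α_{Δ,s}`.
For each coordinate `q` we have a partition `0 = x_{q,0} < ⋯ < x_{q,N_q} = 1` of `[0,1]`;
`v j` (for an index tuple `j`, where `j q : Fin (N q)` encodes the actual index `j q + 1`)
is the affine homeomorphism of the cube onto the subrectangle `∏_q [x_{q,j_q}, x_{q,j_q+1}]`,
increasing in a coordinate when the actual index is odd (i.e. `j q` is even) and decreasing
otherwise.  The self-referential equation
`g(x) = f(x) + α(x)·(g(v_j⁻¹ x) − s(v_j⁻¹ x))` for all `x` in the subrectangle is stated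
equivalently, via the substitution `x = v j t`, as
`g(v j t) = f(v j t) + α(v j t)·(g t − s t)` for all `t` in the cube. -/
theorem exists_unique_multivariate_alpha_fractal_function (k : ℕ) (hk : 1 ≤ k)
    (N : Fin k → ℕ) (hN : ∀ q, 1 ≤ N q)
    (x : (q : Fin k) → Fin (N q + 1) → ℝ)
    (hx0 : ∀ q, x q 0 = 0) (hx1 : ∀ q, x q (Fin.last (N q)) = 1)
    (hmono : ∀ q, StrictMono (x q))
    (hxmem : ∀ q i, x q i ∈ Set.Icc (0:ℝ) 1)
    (v : ((q : Fin k) → Fin (N q)) →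
      (Fin k → Set.Icc (0:ℝ) 1) → (Fin k → Set.Icc (0:ℝ) 1))
    (hv : ∀ j t q, ((v j t q : ℝ)) =
      if (j q : ℕ) % 2 = 0
      then x q (j q).castSucc + (t q : ℝ) * (x q (j q).succ - x q (j q).castSucc)
      else x q (j q).succ + (t q : ℝ) * (x q (j q).castSucc - x q (j q).succ))
    (f s α : C((Fin k → Set.Icc (0:ℝ) 1), ℝ))
    (hα : ‖α‖ < 1)
    (hs : ∀ jf : (q : Fin k) → Fin (N q + 1),
      (∀ q, jf q = 0 ∨ jf q = Fin.last (N q)) →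
      s (fun q => ⟨x q (jf q), hxmem q (jf q)⟩) = f (fun q => ⟨x q (jf q), hxmem q (jf q)⟩)) :
    ∃ g : C((Fin k → Set.Icc (0:ℝ) 1), ℝ),
      ((∀ (j : (q : Fin k) → Fin (N q)) (t : Fin k → Set.Icc (0:ℝ) 1),
          g (v j t) = f (v j t) + α (v j t) * (g t - s t)) ∧
        (∀ jf : (q : Fin k) → Fin (N q + 1),
          g (fun q => ⟨x q (jf q), hxmem q (jf q)⟩) =
            f (fun q => ⟨x q (jf q), hxmem q (jf q)⟩))) ∧
      ∀ g' : C((Fin k → Set.Icc (0:ℝ) 1), ℝ),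
        (∀ (j : (q : Fin k) → Fin (N q)) (t : Fin k → Set.Icc (0:ℝ) 1),
          g' (v j t) = f (v j t) + α (v j t) * (g' t - s t)) → g' = g := by
  classical
  -- the extended partition points, indexed by ℕ
  set Xf : (q : Fin k) → ℕ → ℝ :=
    fun q i => x q ⟨min i (N q), by omega⟩ with hXf
  have hXle : ∀ q (i : ℕ) (h : i ≤ N q), Xf q i = x q ⟨i, by omega⟩ := by
    intro q i h
    simp only [hXf]
    congr 1
    exact Fin.ext (by simp [min_eq_left h])
  have hXm : ∀ q, ∀ i j : ℕ, i < j → j ≤ N q → Xf q i < Xf q j := by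
    intro q i j hij hj
    rw [hXle q i (by omega), hXle q j hj]
    exact hmono q (by simp [Fin.lt_def, hij])
  have hX0' : ∀ q, Xf q 0 = 0 := by
    intro q
    rw [hXle q 0 (by omega)]
    convert hx0 q using 2
    exact Fin.ext (by simp)
  have hXn' : ∀ q, Xf q (N q) = 1 := by
    intro q
    rw [hXle q (N q) le_rfl]
    convert hx1 q using 2
    exact Fin.ext (by simp)
  have hXcast : ∀ q (j : Fin (N q)), x q j.castSucc = Xf q (j : ℕ) := by
    intro q j
    rw [hXle q (j : ℕ) j.2.le]
    congr 1
  have hXsucc : ∀ q (j : Fin (N q)), x q j.succ = Xf q ((j : ℕ) + 1) := by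
    intro q j
    rw [hXle q ((j : ℕ) + 1) j.2]
    congr 1
  -- the inverse map u of the cover
  set u : (Fin k → Set.Icc (0:ℝ) 1) → (Fin k → Set.Icc (0:ℝ) 1) :=
    fun t q => ⟨wfun (Xf q) (N q) (t q),
      wfun_mem (hN q) (hX0' q) (hXn' q) (hXm q) (t q).2⟩ with hu
  have hu_cont : Continuous u := by
    apply continuous_pi
    intro q
    exact ((wfun_cont (hXm q)).comp
      (continuous_subtype_val.comp (continuous_apply q))).subtype_mk _
  have huv : ∀ j t, u (v j t) = t := by
    intro j t
    funext q
    apply Subtype.ext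
    show wfun (Xf q) (N q) ((v j t q : ℝ)) = (t q : ℝ)
    rw [hv j t q, hXcast q (j q), hXsucc q (j q)]
    exact wfun_V (hXm q) (j q).2 (t q).2
  -- the Read–Bajraktarević operator
  set Tmap : C((Fin k → Set.Icc (0:ℝ) 1), ℝ) → C((Fin k → Set.Icc (0:ℝ) 1), ℝ) :=
    fun g => ⟨fun y => f y + α y * (g (u y) - s (u y)),
      f.continuous.add (α.continuous.mul
        ((g.continuous.comp hu_cont).sub (s.continuous.comp hu_cont)))⟩ with hT
  haveI : Nonempty C((Fin k → Set.Icc (0:ℝ) 1), ℝ) := ⟨0⟩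
  have contr : ContractingWith ‖α‖₊ Tmap := by
    constructor
    · rw [← NNReal.coe_lt_coe]
      simpa using hα
    · apply LipschitzWith.of_dist_le_mul
      intro g g'
      rw [coe_nnnorm]
      apply ContinuousMap.dist_le (mul_nonneg (norm_nonneg _) dist_nonneg) |>.2
      intro y
      show dist (f y + α y * (g (u y) - s (u y))) (f y + α y * (g' (u y) - s (u y))) ≤ _
      rw [Real.dist_eq]
      have h1 : f y + α y * (g (u y) - s (u y)) - (f y + α y * (g' (u y) - s (u y)))
          = α y * (g (u y) - g' (u y)) := by ring
      rw [h1, abs_mul]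
      have h2 : |α y| ≤ ‖α‖ := α.norm_coe_le_norm y
      have h3 : |g (u y) - g' (u y)| ≤ dist g g' := by
        rw [← Real.dist_eq]
        exact ContinuousMap.dist_apply_le_dist (u y)
      exact mul_le_mul h2 h3 (abs_nonneg _) (norm_nonneg _)
  set g := ContractingWith.fixedPoint Tmap contr with hg
  have hfp : Tmap g = g := contr.fixedPoint_isFixedPt
  have hfix : ∀ y, g y = f y + α y * (g (u y) - s (u y)) := by
    intro y
    conv_lhs => rw [← hfp]
    rfl
  -- the self-referential equation
  have heq : ∀ (j : (q : Fin k) → Fin (N q)) (t : Fin k → Set.Icc (0:ℝ) 1),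
      g (v j t) = f (v j t) + α (v j t) * (g t - s t) := by
    intro j t
    have := hfix (v j t)
    rwa [huv j t] at this
  -- corners
  set corner : (Fin k → Bool) → (Fin k → Set.Icc (0:ℝ) 1) :=
    fun b q => if b q then ⟨1, by norm_num⟩ else ⟨0, by norm_num⟩ with hcorner
  have hcornergrid : ∀ b, ∃ jf : (q : Fin k) → Fin (N q + 1),
      (∀ q, jf q = 0 ∨ jf q = Fin.last (N q)) ∧
      corner b = fun q => ⟨x q (jf q), hxmem q (jf q)⟩ := by
    intro b
    refine ⟨fun q => if b q then Fin.last (N q) else 0, fun q => ?_, ?_⟩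
    · by_cases h : b q <;> simp [h]
    · funext q
      apply Subtype.ext
      by_cases h : b q <;> simp [hcorner, h, hx0, hx1]
  have hscorner : ∀ b, s (corner b) = f (corner b) := by
    intro b
    obtain ⟨jf, hjf, hb⟩ := hcornergrid b
    rw [hb]
    exact hs jf hjf
  -- w sends partition points into {0,1}
  have hw01 : ∀ q (i : Fin (N q + 1)),
      wfun (Xf q) (N q) (x q i) = 0 ∨ wfun (Xf q) (N q) (x q i) = 1 := by
    intro q i
    have h := hXle q (i : ℕ) (by omega)
    rw [Fin.eta] at h
    rw [← h]
    exact wfun_grid (hN q) (hXm q) (by omega)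
  -- u sends grid points to corners
  have hugrid : ∀ jf : (q : Fin k) → Fin (N q + 1),
      ∃ b, u (fun q => ⟨x q (jf q), hxmem q (jf q)⟩) = corner b := by
    intro jf
    set P : Fin k → Set.Icc (0:ℝ) 1 := fun q => ⟨x q (jf q), hxmem q (jf q)⟩ with hP
    have hex : ∀ q, ∃ bq : Bool, (u P q : ℝ) = if bq then 1 else 0 := by
      intro q
      rcases hw01 q (jf q) with h | h
      · exact ⟨false, h⟩
      · exact ⟨true, h⟩
    choose b hb using hex
    refine ⟨b, funext fun q => Subtype.ext ?_⟩
    rw [hb q]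
    by_cases h : b q <;> simp [hcorner, h]
  -- g = f on corners
  have hgfcorner : ∀ b, g (corner b) = f (corner b) := by
    have hub : ∀ b, ∃ b', u (corner b) = corner b' := by
      intro b
      obtain ⟨jf, _, hb⟩ := hcornergrid b
      rw [hb]
      exact hugrid jf
    set M := Finset.univ.sup' Finset.univ_nonempty
      (fun b : Fin k → Bool => |g (corner b) - f (corner b)|) with hM
    have hMb : ∀ b, |g (corner b) - f (corner b)| ≤ M :=
      fun b => Finset.le_sup'
        (fun b : Fin k → Bool => |g (corner b) - f (corner b)|) (Finset.mem_univ b)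
    have hM0 : 0 ≤ M := le_trans (abs_nonneg _) (hMb (fun _ => false))
    have hMle : M ≤ ‖α‖ * M := by
      apply Finset.sup'_le
      intro b _
      obtain ⟨b', hb'⟩ := hub b
      have h1 : g (corner b) - f (corner b)
          = α (corner b) * (g (corner b') - f (corner b')) := by
        have := hfix (corner b)
        rw [hb', hscorner b'] at this
        linarith
      rw [h1, abs_mul]
      calc |α (corner b)| * |g (corner b') - f (corner b')|
          ≤ ‖α‖ * |g (corner b') - f (corner b')| :=
            mul_le_mul_of_nonneg_right (α.norm_coe_le_norm _) (abs_nonneg _)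
        _ ≤ ‖α‖ * M := mul_le_mul_of_nonneg_left (hMb b') (norm_nonneg _)
    have hMzero : M = 0 := by nlinarith
    intro b
    have := hMb b
    rw [hMzero] at this
    have := abs_nonpos_iff.1 this
    linarith [sub_eq_zero.1 this]
  -- g = f at all grid points
  have hgrid : ∀ jf : (q : Fin k) → Fin (N q + 1),
      g (fun q => ⟨x q (jf q), hxmem q (jf q)⟩) =
        f (fun q => ⟨x q (jf q), hxmem q (jf q)⟩) := by
    intro jf
    obtain ⟨b, hb⟩ := hugrid jf
    have := hfix (fun q => ⟨x q (jf q), hxmem q (jf q)⟩)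
    rw [hb, hscorner b, hgfcorner b] at this
    simpa using this
  refine ⟨g, ⟨heq, hgrid⟩, ?_⟩
  -- uniqueness
  intro g' hg'
  have hfix' : Function.IsFixedPt Tmap g' := by
    apply ContinuousMap.ext
    intro y
    have h := fun q => exists_V (hN q) (hX0' q) (hXn' q) (hXm q) (y q).2
    choose i hi tq htq hV using h
    set j : (q : Fin k) → Fin (N q) := fun q => ⟨i q, hi q⟩ with hj
    set t : Fin k → Set.Icc (0:ℝ) 1 := fun q => ⟨tq q, htq q⟩ with ht
    have hy : v j t = y := by
      funext q
      apply Subtype.ext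
      rw [hv j t q, hXcast q (j q), hXsucc q (j q)]
      exact hV q
    have hut : u y = t := by rw [← hy, huv]
    have := hg' j t
    rw [hy] at this
    show f y + α y * (g' (u y) - s (u y)) = g' y
    rw [hut, this]
  exact contr.fixedPoint_unique hfix'
end

section
/- Let k ≥ 1 and 1 ≤ p < ∞. Fix, for each q ∈ {1,…,k}, a partition 0 = x_{q,0} < ⋯ < x_{q,N_q} = 1 of [0,1] and the affine homeomorphisms v_{q,j} : [0,1] → [x_{q,j−1}, x_{q,j}] determined by v_{q,j}(0) = x_{q,j−1}, v_{q,j}(1) = x_{q,j} when j is odd and v_{q,j}(0) = x_{q,j}, v_{q,j}(1) = x_{q,j−1} when j is even. Let f, s, α ∈ C([0,1]^k, ℝ) with ‖α‖∞ < 1, and suppose g ∈ C([0,1]^k, ℝ) satisfies the self-referential equation g(x₁,…,x_k) = f(x₁,…,x_k) + α(x₁,…,x_k)·[ g(v_{1,j₁}⁻¹(x₁),…,v_{k,j_k}⁻¹(x_k)) − s(v_{1,j₁}⁻¹(x₁),…,v_{k,j_k}⁻¹(x_k)) ] for every index tuple (j₁,…,j_k) and every (x₁,…,x_k) ∈ ∏_{q=1}^k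 [x_{q,j_q−1}, x_{q,j_q}]. Then, with respect to Lebesgue measure on [0,1]^k, ‖g − f‖_{L^p} ≤ ‖α‖∞ · ‖g − s‖_{L^p}, and consequently ‖g − f‖_{L^p} ≤ (‖α‖∞/(1 − ‖α‖∞)) · ‖f − s‖_{L^p}. (Paper's Theorem 4.1 with s = Df.) -/
open MeasureTheory

/-- The `L^p`-norm (w.r.t. Lebesgue measure on the cube `[0,1]^k`, realized as the product
of the subtype measures on `[0,1]`) of a function on the cube. -/
noncomputable def cubeLpNorm {k : ℕ} {E : Type*} [NormedAddCommGroup E] (p : ℝ)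
    (u : (Fin k → Set.Icc (0:ℝ) 1) → E) : ℝ :=
  (∫ t : Fin k → Set.Icc (0:ℝ) 1, ‖u t‖ ^ p) ^ (1 / p)

/-- Telescoping union of `Ioc` pieces. -/
lemma aux_iUnion_Ioc {n : ℕ} (x : Fin (n+1) → ℝ) (hm : Monotone x) :
    (⋃ i : Fin n, Set.Ioc (x i.castSucc) (x i.succ)) = Set.Ioc (x 0) (x (Fin.last n)) := by
  ext y
  simp only [Set.mem_iUnion, Set.mem_Ioc]
  constructor
  · rintro ⟨i, h1, h2⟩
    exact ⟨lt_of_le_of_lt (hm (Fin.zero_le _)) h1, h2.trans (hm (Fin.le_last _))⟩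
  · rintro ⟨h1, h2⟩
    classical
    set F := Finset.univ.filter (fun m : Fin (n+1) => x m < y) with hF
    have h0F : (0 : Fin (n+1)) ∈ F := by simp [hF, h1]
    have hne : F.Nonempty := ⟨0, h0F⟩
    set m := F.max' hne with hmdef
    have hm1 : x m < y := by
      have := F.max'_mem hne
      simpa [hF] using this
    have hmn : (m : ℕ) < n := by
      rcases lt_or_eq_of_le (Nat.lt_succ_iff.mp m.isLt) with h | h
      · exact h
      · exfalso
        have : m = Fin.last n := Fin.ext h
        rw [this] at hm1
        exact absurd (lt_of_le_of_lt h2 hm1) (lt_irrefl _)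
    refine ⟨⟨(m : ℕ), hmn⟩, ?_, ?_⟩
    · have hc : (⟨(m : ℕ), hmn⟩ : Fin n).castSucc = m := by
        apply Fin.ext; simp
      rw [hc]; exact hm1
    · by_contra hcon
      push_neg at hcon
      have hs : (⟨(m : ℕ), hmn⟩ : Fin n).succ ∈ F := by
        simp only [hF, Finset.mem_filter, Finset.mem_univ, true_and]
        exact hcon
      have := F.le_max' _ hs
      rw [← hmdef] at this
      have : ((⟨(m : ℕ), hmn⟩ : Fin n).succ : ℕ) ≤ (m : ℕ) := this
      simp at this

/-- Measure of preimage of a measurable set under an affine self-map piece of `[0,1]`. -/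
lemma aux_affine_piece {a b c d : ℝ} (hb : b ≠ 0) (hcd : 0 < d - c)
    (habs : |b| = d - c)
    (hiff : ∀ y : ℝ, a + y * b ∈ Set.Icc c d ↔ y ∈ Set.Icc (0:ℝ) 1)
    (w : Set.Icc (0:ℝ) 1 → Set.Icc (0:ℝ) 1) (hw : ∀ t, (w t : ℝ) = a + (t : ℝ) * b)
    (A : Set (Set.Icc (0:ℝ) 1)) (hA : MeasurableSet A) :
    ENNReal.ofReal (d - c) * volume (w ⁻¹' A)
      = volume (Subtype.val '' A ∩ Set.Icc c d) := by
  have hwc : Measurable fun t : Set.Icc (0:ℝ) 1 => ((w t : ℝ)) := by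
    simp only [hw]
    exact ((measurable_subtype_coe.mul_const b).const_add a)
  have hwm : Measurable w := hwc.subtype_mk
  have hpre : MeasurableSet (w ⁻¹' A) := hwm hA
  have hcomap : (volume : Measure (Set.Icc (0:ℝ) 1)) = volume.comap Subtype.val := rfl
  rw [hcomap, Measure.comap_apply Subtype.val Subtype.val_injective
      (fun s hs => MeasurableSet.subtype_image measurableSet_Icc hs) volume hpre]
  have himg : Subtype.val '' (w ⁻¹' A)
      = (fun y : ℝ => a + y * b) ⁻¹' (Subtype.val '' A ∩ Set.Icc c d) := by
    ext y
    simp only [Set.mem_image, Set.mem_preimage, Set.mem_inter_iff]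
    constructor
    · rintro ⟨t, htA, rfl⟩
      have h1 : a + (t : ℝ) * b = ((w t : ℝ)) := (hw t).symm
      have h2 : a + (t : ℝ) * b ∈ Set.Icc c d := (hiff _).2 t.2
      exact ⟨⟨w t, htA, h1.symm⟩, h2⟩
    · rintro ⟨⟨u, huA, hu⟩, hmem⟩
      have hy01 : y ∈ Set.Icc (0:ℝ) 1 := (hiff y).1 hmem
      refine ⟨⟨y, hy01⟩, ?_, rfl⟩
      have : w ⟨y, hy01⟩ = u := by
        apply Subtype.ext
        rw [hw]; exact hu.symm
      rw [this]; exact huA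
  rw [himg]
  have hcomp : (fun y : ℝ => a + y * b) ⁻¹' (Subtype.val '' A ∩ Set.Icc c d)
      = (fun y : ℝ => b * y) ⁻¹' ((fun z : ℝ => a + z) ⁻¹' (Subtype.val '' A ∩ Set.Icc c d)) := by
    ext y; simp only [Set.mem_preimage, mul_comm]
  rw [hcomp, Real.volume_preimage_mul_left hb, measure_preimage_add]
  rw [← mul_assoc, ← ENNReal.ofReal_mul hcd.le, abs_inv, habs,
    mul_inv_cancel₀ (ne_of_gt hcd), ENNReal.ofReal_one, one_mul]

/-- 1-dimensional decomposition of the measure on `[0,1]` along a partition. -/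
lemma aux_oneD_sum {n : ℕ} (x : Fin (n+1) → ℝ) (hx0 : x 0 = 0) (hx1 : x (Fin.last n) = 1)
    (hm : StrictMono x) (w : Fin n → Set.Icc (0:ℝ) 1 → Set.Icc (0:ℝ) 1)
    (hw : ∀ i t, ((w i t : ℝ)) =
      if (i : ℕ) % 2 = 0
      then x i.castSucc + (t : ℝ) * (x i.succ - x i.castSucc)
      else x i.succ + (t : ℝ) * (x i.castSucc - x i.succ))
    (A : Set (Set.Icc (0:ℝ) 1)) (hA : MeasurableSet A) :
    ∑ i : Fin n, ENNReal.ofReal (x i.succ - x i.castSucc) * volume (w i ⁻¹' A)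
      = volume A := by
  set T := Subtype.val '' A with hT
  have hTm : MeasurableSet T := MeasurableSet.subtype_image measurableSet_Icc hA
  have hT01 : T ⊆ Set.Icc (0:ℝ) 1 := by rintro _ ⟨t, _, rfl⟩; exact t.2
  have step : ∀ i : Fin n,
      ENNReal.ofReal (x i.succ - x i.castSucc) * volume (w i ⁻¹' A)
        = volume (T ∩ Set.Ioc (x i.castSucc) (x i.succ)) := by
    intro i
    have hlt : x i.castSucc < x i.succ := hm (Fin.castSucc_lt_succ : i.castSucc < i.succ)
    have hpos : 0 < x i.succ - x i.castSucc := sub_pos.2 hlt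
    have hIcc : ENNReal.ofReal (x i.succ - x i.castSucc) * volume (w i ⁻¹' A)
        = volume (T ∩ Set.Icc (x i.castSucc) (x i.succ)) := by
      by_cases hpar : (i : ℕ) % 2 = 0
      · refine aux_affine_piece (a := x i.castSucc) (b := x i.succ - x i.castSucc)
          (ne_of_gt hpos) hpos (abs_of_pos hpos) ?_ (w i) (fun t => by rw [hw]; simp [hpar]) A hA
        intro y
        simp only [Set.mem_Icc]
        constructor <;> intro hy <;> constructor <;> nlinarith [hy.1, hy.2]
      · refine aux_affine_piece (a := x i.succ) (b := x i.castSucc - x i.succ)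
          (by linarith) hpos (by rw [abs_of_neg (by linarith)]; ring) ?_ (w i)
          (fun t => by rw [hw]; simp [hpar]) A hA
        intro y
        simp only [Set.mem_Icc]
        constructor <;> intro hy <;> constructor <;> nlinarith [hy.1, hy.2]
    rw [hIcc]
    exact measure_congr (ae_eq_set_inter (Filter.EventuallyEq.refl _ _) Ioc_ae_eq_Icc).symm
  rw [Finset.sum_congr rfl (fun i _ => step i)]
  have hdisj : Pairwise (Function.onFun Disjoint
      fun i : Fin n => T ∩ Set.Ioc (x i.castSucc) (x i.succ)) := by
    intro i j hij
    have : Disjoint (Set.Ioc (x i.castSucc) (x i.succ)) (Set.Ioc (x j.castSucc) (x j.succ)) := by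
      rw [Set.Ioc_disjoint_Ioc]
      rcases lt_or_gt_of_ne (fun h => hij (Fin.ext h) : (i : ℕ) ≠ (j : ℕ)) with h | h
      · calc min (x i.succ) (x j.succ) ≤ x i.succ := min_le_left _ _
          _ ≤ x j.castSucc := hm.monotone (by simp [Fin.le_def]; omega)
          _ ≤ max (x i.castSucc) (x j.castSucc) := le_max_right _ _
      · calc min (x i.succ) (x j.succ) ≤ x j.succ := min_le_right _ _
          _ ≤ x i.castSucc := hm.monotone (by simp [Fin.le_def]; omega)
          _ ≤ max (x i.castSucc) (x j.castSucc) := le_max_left _ _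
    exact Disjoint.inter_left' _ (Disjoint.inter_right' _ this)
  have hmeas : ∀ i : Fin n, MeasurableSet (T ∩ Set.Ioc (x i.castSucc) (x i.succ)) :=
    fun i => hTm.inter measurableSet_Ioc
  have hiu : volume (⋃ i : Fin n, T ∩ Set.Ioc (x i.castSucc) (x i.succ))
      = ∑ i : Fin n, volume (T ∩ Set.Ioc (x i.castSucc) (x i.succ)) := by
    rw [measure_iUnion hdisj hmeas, tsum_fintype]
  rw [← hiu]
  have hu : (⋃ i : Fin n, T ∩ Set.Ioc (x i.castSucc) (x i.succ)) = T ∩ Set.Ioc 0 1 := by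
    rw [← Set.inter_iUnion, aux_iUnion_Ioc x hm.monotone, hx0, hx1]
  rw [hu]
  have h1 : volume (T ∩ Set.Ioc 0 1) = volume (T ∩ Set.Icc 0 1) :=
    measure_congr (ae_eq_set_inter (Filter.EventuallyEq.refl _ _) Ioc_ae_eq_Icc)
  rw [h1, Set.inter_eq_left.2 hT01]
  have hcomap : (volume : Measure (Set.Icc (0:ℝ) 1)) = volume.comap Subtype.val := rfl
  rw [hcomap, Measure.comap_apply Subtype.val Subtype.val_injective
      (fun s hs => MeasurableSet.subtype_image measurableSet_Icc hs) volume hA]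


/-- Paper's Theorem 4.1 (with `s = Df`): the `L^p` perturbation bounds
`‖g − f‖_{L^p} ≤ ‖α‖∞·‖g − s‖_{L^p}` and
`‖g − f‖_{L^p} ≤ (‖α‖∞/(1 − ‖α‖∞))·‖f − s‖_{L^p}` for the α-fractal function `g = f^α_{Δ,s}`,
characterized by the self-referential equation (stated via the substitution `x = v j t`). -/
theorem alpha_fractal_Lp_perturbation (k : ℕ) (hk : 1 ≤ k)
    (p : ℝ) (hp : 1 ≤ p)
    (N : Fin k → ℕ) (hN : ∀ q, 1 ≤ N q)
    (x : (q : Fin k) → Fin (N q + 1) → ℝ)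
    (hx0 : ∀ q, x q 0 = 0) (hx1 : ∀ q, x q (Fin.last (N q)) = 1)
    (hmono : ∀ q, StrictMono (x q))
    (v : ((q : Fin k) → Fin (N q)) →
      (Fin k → Set.Icc (0:ℝ) 1) → (Fin k → Set.Icc (0:ℝ) 1))
    (hv : ∀ j t q, ((v j t q : ℝ)) =
      if (j q : ℕ) % 2 = 0
      then x q (j q).castSucc + (t q : ℝ) * (x q (j q).succ - x q (j q).castSucc)
      else x q (j q).succ + (t q : ℝ) * (x q (j q).castSucc - x q (j q).succ))
    (f s α g : C((Fin k → Set.Icc (0:ℝ) 1), ℝ))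
    (hα : ‖α‖ < 1)
    (hg : ∀ (j : (q : Fin k) → Fin (N q)) (t : Fin k → Set.Icc (0:ℝ) 1),
      g (v j t) = f (v j t) + α (v j t) * (g t - s t)) :
    cubeLpNorm p (⇑g - ⇑f) ≤ ‖α‖ * cubeLpNorm p (⇑g - ⇑s) ∧
    cubeLpNorm p (⇑g - ⇑f) ≤ ‖α‖ / (1 - ‖α‖) * cubeLpNorm p (⇑f - ⇑s) := by
  classical
  have hp0 : (0:ℝ) ≤ p := le_trans zero_le_one hp
  have hpne : p ≠ 0 := by linarith
  -- component maps
  have hmem : ∀ (q : Fin k) (i : Fin (N q)) (t : Set.Icc (0:ℝ) 1),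
      (if (i : ℕ) % 2 = 0
       then x q i.castSucc + (t : ℝ) * (x q i.succ - x q i.castSucc)
       else x q i.succ + (t : ℝ) * (x q i.castSucc - x q i.succ)) ∈ Set.Icc (0:ℝ) 1 := by
    intro q i t
    have h1 : x q i.castSucc < x q i.succ := (hmono q) (Fin.castSucc_lt_succ : i.castSucc < i.succ)
    have h2 : (0:ℝ) ≤ x q i.castSucc := by
      rw [← hx0 q]; exact (hmono q).monotone (Fin.zero_le _)
    have h3 : x q i.succ ≤ 1 := by
      rw [← hx1 q]; exact (hmono q).monotone (Fin.le_last _)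
    have ht1 := t.2.1
    have ht2 := t.2.2
    simp only [Set.mem_Icc]
    split <;> constructor <;> nlinarith
  set w : (q : Fin k) → Fin (N q) → Set.Icc (0:ℝ) 1 → Set.Icc (0:ℝ) 1 :=
    fun q i t => ⟨_, hmem q i t⟩ with hwdef
  have hw : ∀ (q : Fin k) (i : Fin (N q)) (t : Set.Icc (0:ℝ) 1),
      ((w q i t : ℝ)) =
      if (i : ℕ) % 2 = 0
      then x q i.castSucc + (t : ℝ) * (x q i.succ - x q i.castSucc)
      else x q i.succ + (t : ℝ) * (x q i.castSucc - x q i.succ) := fun q i t => rfl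
  have hvw : ∀ j t q, v j t q = w q (j q) (t q) := by
    intro j t q
    apply Subtype.ext
    rw [hv j t q, hw]
  have hwm : ∀ (q : Fin k) (i : Fin (N q)), Measurable (w q i) := by
    intro q i
    apply Measurable.subtype_mk
    by_cases hpar : (i : ℕ) % 2 = 0 <;> simp only [hpar, if_true, if_false] <;>
      exact ((measurable_subtype_coe.mul_const _).const_add _)
  have hvm : ∀ j, Measurable (v j) := by
    intro j
    rw [measurable_pi_iff]
    intro q
    have : (fun t => v j t q) = fun t : Fin k → Set.Icc (0:ℝ) 1 => w q (j q) (t q) := by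
      funext t; exact hvw j t q
    rw [this]
    exact (hwm q (j q)).comp (measurable_pi_apply q)
  -- the weights
  set c : ((q : Fin k) → Fin (N q)) → ENNReal :=
    fun j => ∏ q, ENNReal.ofReal (x q (j q).succ - x q (j q).castSucc) with hcdef
  -- measure decomposition
  have hkey : (volume : Measure (Fin k → Set.Icc (0:ℝ) 1))
      = ∑ j : ((q : Fin k) → Fin (N q)), c j • Measure.map (v j) volume := by
    conv_lhs => rw [volume_pi]
    apply Measure.pi_eq
    intro S hS
    rw [Measure.finset_sum_apply]
    have hpre : ∀ j, (v j) ⁻¹' (Set.univ.pi S)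
        = Set.univ.pi (fun q => w q (j q) ⁻¹' S q) := by
      intro j
      ext t
      simp only [Set.mem_preimage, Set.mem_pi, Set.mem_univ, true_implies]
      constructor <;> intro h q <;> [rw [← hvw j t q]; rw [hvw j t q]] <;> exact h q
    have hterm : ∀ j : ((q : Fin k) → Fin (N q)),
        (c j • Measure.map (v j) volume) (Set.univ.pi S)
        = ∏ q, (ENNReal.ofReal (x q (j q).succ - x q (j q).castSucc)
            * volume (w q (j q) ⁻¹' S q)) := by
      intro j
      rw [Measure.smul_apply, Measure.map_apply (hvm j) (MeasurableSet.univ_pi hS),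
        hpre, volume_pi_pi, smul_eq_mul, hcdef, ← Finset.prod_mul_distrib]
    rw [Finset.sum_congr rfl (fun j _ => hterm j)]
    rw [← Fintype.piFinset_univ,
      ← Finset.prod_univ_sum (fun q : Fin k => (Finset.univ : Finset (Fin (N q))))
        (fun q i => ENNReal.ofReal (x q i.succ - x q i.castSucc) * volume (w q i ⁻¹' S q))]
    exact Finset.prod_congr rfl fun q _ =>
      aux_oneD_sum (x q) (hx0 q) (hx1 q) (hmono q) (w q) (hw q) (S q) (hS q)
  -- lintegral decomposition
  have hdecomp : ∀ H : (Fin k → Set.Icc (0:ℝ) 1) → ENNReal, Measurable H →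
      ∫⁻ t, H t = ∑ j : ((q : Fin k) → Fin (N q)), c j * ∫⁻ t, H (v j t) := by
    intro H hH
    conv_lhs => rw [hkey]
    rw [lintegral_finset_sum_measure]
    exact Finset.sum_congr rfl fun j _ => by
      rw [lintegral_smul_measure, lintegral_map hH (hvm j), smul_eq_mul]
  -- weights sum to 1
  have hsum1 : ∀ q : Fin k,
      ∑ i : Fin (N q), ENNReal.ofReal (x q i.succ - x q i.castSucc) = 1 := by
    intro q
    rw [← ENNReal.ofReal_sum_of_nonneg
      (fun i _ => sub_nonneg.2 ((hmono q).monotone (Fin.castSucc_lt_succ : i.castSucc < i.succ).le))]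
    have htel : ∑ i : Fin (N q), (x q i.succ - x q i.castSucc) = 1 := by
      set n := N q with hn
      set F : ℕ → ℝ := fun m => x q ⟨min m n, by omega⟩ with hFdef
      have h1 : ∀ i : Fin n, x q i.succ - x q i.castSucc = F ((i : ℕ) + 1) - F (i : ℕ) := by
        intro i
        have hilt := i.isLt
        have e1 : F ((i : ℕ) + 1) = x q i.succ := by
          simp only [hFdef]; congr 1; apply Fin.ext
          simp only [Fin.val_succ]; omega
        have e2 : F (i : ℕ) = x q i.castSucc := by
          simp only [hFdef]; congr 1; apply Fin.ext
          simp only [Fin.coe_castSucc]; omega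
        rw [e1, e2]
      rw [Finset.sum_congr rfl (fun i _ => h1 i),
        Fin.sum_univ_eq_sum_range (fun m => F (m + 1) - F m), Finset.sum_range_sub]
      have e3 : F n = 1 := by
        simp only [hFdef]
        have : (⟨min n n, by omega⟩ : Fin (n+1)) = Fin.last n := by
          apply Fin.ext; simp only [Fin.val_last]; omega
        rw [this]; exact hx1 q
      have e4 : F 0 = 0 := by
        simp only [hFdef]
        have : (⟨min 0 n, by omega⟩ : Fin (n+1)) = 0 := by
          apply Fin.ext; simp only [Fin.val_zero]; omega
        rw [this]; exact hx0 q
      rw [e3, e4]; ring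
    rw [htel, ENNReal.ofReal_one]
  have hcsum : ∑ j : ((q : Fin k) → Fin (N q)), c j = 1 := by
    rw [hcdef, ← Fintype.piFinset_univ,
      ← Finset.prod_univ_sum (fun q : Fin k => (Finset.univ : Finset (Fin (N q))))
        (fun q i => ENNReal.ofReal (x q i.succ - x q i.castSucc))]
    rw [Finset.prod_congr rfl (fun q _ => hsum1 q), Finset.prod_const_one]
  -- integrand functions
  set Fg : (Fin k → Set.Icc (0:ℝ) 1) → ENNReal := fun t => ENNReal.ofReal |g t - f t| with hFgdef
  set Gg : (Fin k → Set.Icc (0:ℝ) 1) → ENNReal := fun t => ENNReal.ofReal |g t - s t| with hGgdef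
  set Hg : (Fin k → Set.Icc (0:ℝ) 1) → ENNReal := fun t => ENNReal.ofReal |f t - s t| with hHgdef
  have hFgm : Measurable Fg := ((g.continuous.sub f.continuous).measurable).abs.ennreal_ofReal
  have hGgm : Measurable Gg := ((g.continuous.sub s.continuous).measurable).abs.ennreal_ofReal
  have hHgm : Measurable Hg := ((f.continuous.sub s.continuous).measurable).abs.ennreal_ofReal
  have hFgp : Measurable fun t => Fg t ^ p := ENNReal.continuous_rpow_const.measurable.comp hFgm
  have hGgp : Measurable fun t => Gg t ^ p := ENNReal.continuous_rpow_const.measurable.comp hGgm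
  -- pointwise self-referential estimate
  have hpoint : ∀ (j : (q : Fin k) → Fin (N q)) t, Fg (v j t) ≤ ENNReal.ofReal ‖α‖ * Gg t := by
    intro j t
    have h1 : g (v j t) - f (v j t) = α (v j t) * (g t - s t) := by rw [hg j t]; ring
    have h2 : Fg (v j t) = ENNReal.ofReal |α (v j t)| * ENNReal.ofReal |g t - s t| := by
      rw [hFgdef]
      simp only
      rw [h1, abs_mul, ENNReal.ofReal_mul (abs_nonneg _)]
    rw [h2, hGgdef]
    exact mul_le_mul_left (ENNReal.ofReal_le_ofReal
      (by simpa [Real.norm_eq_abs] using α.norm_coe_le_norm (v j t))) _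
  -- main lintegral estimate
  have hmain : ∫⁻ t, Fg t ^ p ≤ ENNReal.ofReal ‖α‖ ^ p * ∫⁻ t, Gg t ^ p := by
    rw [hdecomp (fun t => Fg t ^ p) hFgp]
    calc ∑ j : ((q : Fin k) → Fin (N q)), c j * ∫⁻ t, Fg (v j t) ^ p
        ≤ ∑ j : ((q : Fin k) → Fin (N q)),
            c j * (ENNReal.ofReal ‖α‖ ^ p * ∫⁻ t, Gg t ^ p) := by
          refine Finset.sum_le_sum fun j _ => mul_le_mul_right ?_ _
          calc ∫⁻ t, Fg (v j t) ^ p ≤ ∫⁻ t, (ENNReal.ofReal ‖α‖ * Gg t) ^ p :=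
                lintegral_mono fun t => ENNReal.rpow_le_rpow (hpoint j t) hp0
            _ = ENNReal.ofReal ‖α‖ ^ p * ∫⁻ t, Gg t ^ p := by
                simp_rw [ENNReal.mul_rpow_of_nonneg _ _ hp0]
                rw [lintegral_const_mul _ hGgp]
      _ = ENNReal.ofReal ‖α‖ ^ p * ∫⁻ t, Gg t ^ p := by
          rw [← Finset.sum_mul, hcsum, one_mul]
  -- finiteness
  have hfin : ∀ u : C((Fin k → Set.Icc (0:ℝ) 1), ℝ),
      ∫⁻ t, (ENNReal.ofReal |u t|) ^ p ≠ ⊤ := by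
    intro u
    have hb : ∀ t, (ENNReal.ofReal |u t|) ^ p ≤ (ENNReal.ofReal ‖u‖) ^ p := fun t =>
      ENNReal.rpow_le_rpow (ENNReal.ofReal_le_ofReal
        (by simpa [Real.norm_eq_abs] using u.norm_coe_le_norm t)) hp0
    refine ne_top_of_le_ne_top ?_ (lintegral_mono hb)
    rw [lintegral_const, measure_univ, mul_one]
    exact (ENNReal.rpow_lt_top_of_nonneg hp0 ENNReal.ofReal_ne_top).ne
  have hfinF : ∫⁻ t, Fg t ^ p ≠ ⊤ := by
    have := hfin (g - f)
    simpa only [ContinuousMap.sub_apply] using this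
  have hfinG : ∫⁻ t, Gg t ^ p ≠ ⊤ := by
    have := hfin (g - s)
    simpa only [ContinuousMap.sub_apply] using this
  have hfinH : ∫⁻ t, Hg t ^ p ≠ ⊤ := by
    have := hfin (f - s)
    simpa only [ContinuousMap.sub_apply] using this
  -- representation of cubeLpNorm via lintegral
  have hrepr : ∀ u1 u2 : C((Fin k → Set.Icc (0:ℝ) 1), ℝ),
      cubeLpNorm p (⇑u1 - ⇑u2)
        = ((∫⁻ t, (ENNReal.ofReal |u1 t - u2 t|) ^ p).toReal) ^ (1/p) := by
    intro u1 u2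
    have hcont : Continuous fun t : Fin k → Set.Icc (0:ℝ) 1 => u1 t - u2 t :=
      u1.continuous.sub u2.continuous
    unfold cubeLpNorm
    simp only [Pi.sub_apply]
    rw [integral_eq_lintegral_of_nonneg_ae
      (Filter.Eventually.of_forall fun t => Real.rpow_nonneg (norm_nonneg _) p)
      ((hcont.norm.rpow_const fun t => Or.inr hp0).aestronglyMeasurable)]
    congr 2
    refine lintegral_congr fun t => ?_
    rw [Real.norm_eq_abs, ← ENNReal.ofReal_rpow_of_nonneg (abs_nonneg _) hp0]
  set A := (∫⁻ t, Fg t ^ p).toReal ^ (1/p) with hAdef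
  set B := (∫⁻ t, Gg t ^ p).toReal ^ (1/p) with hBdef
  set C := (∫⁻ t, Hg t ^ p).toReal ^ (1/p) with hCdef
  have hreprA : cubeLpNorm p (⇑g - ⇑f) = A := hrepr g f
  have hreprB : cubeLpNorm p (⇑g - ⇑s) = B := hrepr g s
  have hreprC : cubeLpNorm p (⇑f - ⇑s) = C := hrepr f s
  -- first inequality in ℝ
  have h1 : A ≤ ‖α‖ * B := by
    have hRfin : ENNReal.ofReal ‖α‖ ^ p * ∫⁻ t, Gg t ^ p ≠ ⊤ :=
      ENNReal.mul_ne_top (ENNReal.rpow_lt_top_of_nonneg hp0 ENNReal.ofReal_ne_top).ne hfinG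
    have ht := ENNReal.toReal_mono hRfin hmain
    rw [ENNReal.toReal_mul, ← ENNReal.toReal_rpow, ENNReal.toReal_ofReal (norm_nonneg α)] at ht
    calc A ≤ (‖α‖ ^ p * (∫⁻ t, Gg t ^ p).toReal) ^ (1/p) :=
          Real.rpow_le_rpow ENNReal.toReal_nonneg ht (by positivity)
      _ = ‖α‖ * B := by
          rw [Real.mul_rpow (Real.rpow_nonneg (norm_nonneg _) _) ENNReal.toReal_nonneg,
            ← Real.rpow_mul (norm_nonneg _), mul_one_div_cancel hpne, Real.rpow_one, hBdef]
  -- Minkowski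
  have h2 : B ≤ A + C := by
    have hmink : (∫⁻ t, Gg t ^ p) ^ (1/p)
        ≤ (∫⁻ t, Fg t ^ p) ^ (1/p) + (∫⁻ t, Hg t ^ p) ^ (1/p) := by
      have hpt : ∀ t, Gg t ≤ (Fg + Hg) t := by
        intro t
        simp only [Pi.add_apply, hFgdef, hGgdef, hHgdef]
        rw [← ENNReal.ofReal_add (abs_nonneg _) (abs_nonneg _)]
        exact ENNReal.ofReal_le_ofReal (abs_sub_le (g t) (f t) (s t))
      calc (∫⁻ t, Gg t ^ p) ^ (1/p) ≤ (∫⁻ t, (Fg + Hg) t ^ p) ^ (1/p) :=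
            ENNReal.rpow_le_rpow
              (lintegral_mono fun t => ENNReal.rpow_le_rpow (hpt t) hp0) (by positivity)
        _ ≤ _ := ENNReal.lintegral_Lp_add_le hFgm.aemeasurable hHgm.aemeasurable hp
    have hfinsum : (∫⁻ t, Fg t ^ p) ^ (1/p) + (∫⁻ t, Hg t ^ p) ^ (1/p) ≠ ⊤ :=
      ENNReal.add_ne_top.2 ⟨(ENNReal.rpow_lt_top_of_nonneg (by positivity) hfinF).ne,
        (ENNReal.rpow_lt_top_of_nonneg (by positivity) hfinH).ne⟩
    have ht := ENNReal.toReal_mono hfinsum hmink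
    rw [ENNReal.toReal_add
        (ENNReal.rpow_lt_top_of_nonneg (by positivity) hfinF).ne
        (ENNReal.rpow_lt_top_of_nonneg (by positivity) hfinH).ne,
      ← ENNReal.toReal_rpow, ← ENNReal.toReal_rpow, ← ENNReal.toReal_rpow] at ht
    exact ht
  have ha0 : (0:ℝ) ≤ ‖α‖ := norm_nonneg α
  have h1a : (0:ℝ) < 1 - ‖α‖ := by linarith
  have hA0 : 0 ≤ A := Real.rpow_nonneg ENNReal.toReal_nonneg _
  have hC0 : 0 ≤ C := Real.rpow_nonneg ENNReal.toReal_nonneg _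
  constructor
  · rw [hreprA, hreprB]; exact h1
  · rw [hreprA, hreprC, div_mul_eq_mul_div, le_div_iff₀ h1a]
    nlinarith [mul_le_mul_of_nonneg_left h2 ha0]
end

section
/- Let k ≥ 1 and 2 ≤ p < ∞. Let F : C([0,1]^k, ℝ) → C([0,1]^k, ℝ) be a linear map with ‖Fu‖_{L^p} ≤ N·‖u‖_{L^p} for all real-valued continuous u, where N ≥ 0, and define F_ℂ : C([0,1]^k, ℂ) → C([0,1]^k, ℂ) by F_ℂ(f) = F(Re f) + i·F(Im f). Then ‖F_ℂ(f)‖_{L^p} ≤ 2^{1/2 − 1/p} · N · ‖f‖_{L^p} for every f ∈ C([0,1]^k, ℂ); in particular, for p = 2, ‖F_ℂ(f)‖_{L^2} ≤ N · ‖f‖_{L^2}. (Paper's Remark 4.3.) -/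
open MeasureTheory

/-- Real part, as a continuous real-valued map. -/
noncomputable def reCM {X : Type*} [TopologicalSpace X] (f : C(X, ℂ)) : C(X, ℝ) :=
  ⟨fun t => (f t).re, Complex.continuous_re.comp f.continuous⟩

/-- Imaginary part, as a continuous real-valued map. -/
noncomputable def imCM {X : Type*} [TopologicalSpace X] (f : C(X, ℂ)) : C(X, ℝ) :=
  ⟨fun t => (f t).im, Complex.continuous_im.comp f.continuous⟩

/-- Inclusion of real-valued into complex-valued continuous maps. -/
noncomputable def ofRealCM {X : Type*} [TopologicalSpace X] (u : C(X, ℝ)) : C(X, ℂ) :=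
  ⟨fun t => (u t : ℂ), Complex.continuous_ofReal.comp u.continuous⟩

/-- Complexification `F_ℂ(f) = F(Re f) + i·F(Im f)` of a map `F` on real-valued functions. -/
noncomputable def complexify {X : Type*} [TopologicalSpace X]
    (F : C(X, ℝ) → C(X, ℝ)) (f : C(X, ℂ)) : C(X, ℂ) :=
  ofRealCM (F (reCM f)) + Complex.I • ofRealCM (F (imCM f))

private lemma aux_rpow_le_mul (a b q : ℝ) (ha : 0 ≤ a) (hb : 0 ≤ b) (hq : 1 ≤ q) :
    (a + b) ^ q ≤ 2 ^ (q - 1) * (a ^ q + b ^ q) := by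
  lift a to NNReal using ha
  lift b to NNReal using hb
  exact_mod_cast NNReal.rpow_add_le_mul_rpow_add_rpow a b hq

private lemma aux_add_rpow_le (a b q : ℝ) (ha : 0 ≤ a) (hb : 0 ≤ b) (hq : 1 ≤ q) :
    a ^ q + b ^ q ≤ (a + b) ^ q := by
  lift a to NNReal using ha
  lift b to NNReal using hb
  exact_mod_cast NNReal.add_rpow_le_rpow_add a b hq

private lemma aux_norm_rpow (z : ℂ) (p : ℝ) : ‖z‖ ^ p = (z.re ^ 2 + z.im ^ 2) ^ (p / 2) := by
  have h : (0:ℝ) ≤ z.re * z.re + z.im * z.im :=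
    add_nonneg (mul_self_nonneg _) (mul_self_nonneg _)
  rw [Complex.norm_def, Complex.normSq_apply, Real.sqrt_eq_rpow,
    ← Real.rpow_mul h, show z.re * z.re + z.im * z.im = z.re ^ 2 + z.im ^ 2 by ring,
    show (1:ℝ)/2 * p = p/2 by ring]

private lemma aux_sq_rpow (a p : ℝ) : (a ^ 2) ^ (p / 2) = ‖a‖ ^ p := by
  rw [show a ^ 2 = ‖a‖ ^ 2 by simp [Real.norm_eq_abs, sq_abs],
    show (‖a‖:ℝ) ^ (2:ℕ) = ‖a‖ ^ ((2:ℕ):ℝ) from (Real.rpow_natCast _ 2).symm,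
    ← Real.rpow_mul (norm_nonneg a), show ((2:ℕ):ℝ) * (p/2) = p by push_cast; ring]

/-- Paper's Remark 4.3: for `2 ≤ p < ∞`, the complexification satisfies the sharper bound
`‖F_ℂ(f)‖_{L^p} ≤ 2^{1/2 − 1/p}·N·‖f‖_{L^p}`; in particular for `p = 2`,
`‖F_ℂ(f)‖_{L^2} ≤ N·‖f‖_{L^2}`. -/
theorem complexification_bounded_of_two_le (k : ℕ) (hk : 1 ≤ k)
    (p : ℝ) (hp : 2 ≤ p)
    (F : C((Fin k → Set.Icc (0:ℝ) 1), ℝ) →ₗ[ℝ] C((Fin k → Set.Icc (0:ℝ) 1), ℝ))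
    (N : ℝ) (hN : 0 ≤ N)
    (hF : ∀ u : C((Fin k → Set.Icc (0:ℝ) 1), ℝ), cubeLpNorm p ⇑(F u) ≤ N * cubeLpNorm p ⇑u) :
    ∀ f : C((Fin k → Set.Icc (0:ℝ) 1), ℂ),
      cubeLpNorm p ⇑(complexify (⇑F) f) ≤ 2 ^ ((1:ℝ)/2 - 1/p) * N * cubeLpNorm p ⇑f := by
  intro f
  have hp0 : (0:ℝ) < p := lt_of_lt_of_le two_pos hp
  have hq1 : (1:ℝ) ≤ p / 2 := by linarith
  set u : C((Fin k → Set.Icc (0:ℝ) 1), ℝ) := reCM f with hu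
  set v : C((Fin k → Set.Icc (0:ℝ) 1), ℝ) := imCM f with hv
  -- integrability of all relevant functions
  have hintR : ∀ g : C((Fin k → Set.Icc (0:ℝ) 1), ℝ),
      Integrable (fun t => ‖g t‖ ^ p) := by
    intro g
    have hc : Continuous fun t => ‖g t‖ ^ p :=
      Continuous.rpow_const (continuous_norm.comp g.continuous) (fun t => Or.inr hp0.le)
    exact hc.integrable_of_hasCompactSupport (HasCompactSupport.of_compactSpace _)
  have hintC : ∀ g : C((Fin k → Set.Icc (0:ℝ) 1), ℂ),
      Integrable (fun t => ‖g t‖ ^ p) := by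
    intro g
    have hc : Continuous fun t => ‖g t‖ ^ p :=
      Continuous.rpow_const (continuous_norm.comp g.continuous) (fun t => Or.inr hp0.le)
    exact hc.integrable_of_hasCompactSupport (HasCompactSupport.of_compactSpace _)
  have hInnR : ∀ g : C((Fin k → Set.Icc (0:ℝ) 1), ℝ), 0 ≤ ∫ t, ‖g t‖ ^ p :=
    fun g => integral_nonneg fun t => Real.rpow_nonneg (norm_nonneg _) p
  have hInnC : ∀ g : C((Fin k → Set.Icc (0:ℝ) 1), ℂ), 0 ≤ ∫ t, ‖g t‖ ^ p :=
    fun g => integral_nonneg fun t => Real.rpow_nonneg (norm_nonneg _) p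
  -- from hF : integral-power versions
  have hFpow : ∀ g : C((Fin k → Set.Icc (0:ℝ) 1), ℝ),
      (∫ t, ‖(F g) t‖ ^ p) ≤ N ^ p * ∫ t, ‖g t‖ ^ p := by
    intro g
    have h1 : (∫ t, ‖(F g) t‖ ^ p) ^ (1/p) ≤ N * (∫ t, ‖g t‖ ^ p) ^ (1/p) := hF g
    have h2 := Real.rpow_le_rpow (Real.rpow_nonneg (hInnR _) _) h1 hp0.le
    rwa [← Real.rpow_mul (hInnR _), one_div_mul_cancel hp0.ne', Real.rpow_one,
      Real.mul_rpow hN (Real.rpow_nonneg (hInnR _) _),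
      ← Real.rpow_mul (hInnR _), one_div_mul_cancel hp0.ne', Real.rpow_one] at h2
  -- evaluation of the complexification
  have hre : ∀ t, (complexify (⇑F) f) t = ((F u) t : ℂ) + Complex.I * ((F v) t : ℂ) := by
    intro t
    simp [complexify, ofRealCM, hu, hv]
  -- pointwise bound (step B)
  have hptB : ∀ t, ‖(complexify (⇑F) f) t‖ ^ p
      ≤ 2 ^ (p/2 - 1) * (‖(F u) t‖ ^ p + ‖(F v) t‖ ^ p) := by
    intro t
    rw [aux_norm_rpow, hre t]
    have hre' : (((F u) t : ℂ) + Complex.I * ((F v) t : ℂ)).re = (F u) t := by simp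
    have him' : (((F u) t : ℂ) + Complex.I * ((F v) t : ℂ)).im = (F v) t := by simp
    rw [hre', him', ← aux_sq_rpow ((F u) t) p, ← aux_sq_rpow ((F v) t) p]
    have := aux_rpow_le_mul ((F u) t ^ 2) ((F v) t ^ 2) (p/2) (sq_nonneg _) (sq_nonneg _) hq1
    simpa using this
  -- pointwise bound (step C)
  have hptC : ∀ t, ‖u t‖ ^ p + ‖v t‖ ^ p ≤ ‖f t‖ ^ p := by
    intro t
    rw [aux_norm_rpow (f t) p]
    have hre' : (f t).re = u t := by simp [hu, reCM]
    have him' : (f t).im = v t := by simp [hv, imCM]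
    rw [hre', him', ← aux_sq_rpow (u t) p, ← aux_sq_rpow (v t) p]
    exact aux_add_rpow_le _ _ _ (sq_nonneg _) (sq_nonneg _) hq1
  -- integrate step B
  have hB : (∫ t, ‖(complexify (⇑F) f) t‖ ^ p)
      ≤ 2 ^ (p/2 - 1) * ((∫ t, ‖(F u) t‖ ^ p) + ∫ t, ‖(F v) t‖ ^ p) := by
    have hi : Integrable (fun t => 2 ^ (p/2 - 1) * (‖(F u) t‖ ^ p + ‖(F v) t‖ ^ p)) :=
      ((hintR (F u)).add (hintR (F v))).const_mul _
    calc (∫ t, ‖(complexify (⇑F) f) t‖ ^ p)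
        ≤ ∫ t, 2 ^ (p/2 - 1) * (‖(F u) t‖ ^ p + ‖(F v) t‖ ^ p) :=
          integral_mono (hintC _) hi hptB
      _ = 2 ^ (p/2 - 1) * ((∫ t, ‖(F u) t‖ ^ p) + ∫ t, ‖(F v) t‖ ^ p) := by
          rw [integral_const_mul, integral_add (hintR (F u)) (hintR (F v))]
  -- integrate step C
  have hC : (∫ t, ‖u t‖ ^ p) + (∫ t, ‖v t‖ ^ p) ≤ ∫ t, ‖f t‖ ^ p := by
    rw [← integral_add (hintR u) (hintR v)]
    exact integral_mono ((hintR u).add (hintR v)) (hintC f) hptC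
  -- combine
  have h2pos : (0:ℝ) ≤ 2 ^ (p/2 - 1) := Real.rpow_nonneg (by norm_num) _
  have hNp : (0:ℝ) ≤ N ^ p := Real.rpow_nonneg hN p
  have hmain : (∫ t, ‖(complexify (⇑F) f) t‖ ^ p)
      ≤ 2 ^ (p/2 - 1) * N ^ p * ∫ t, ‖f t‖ ^ p := by
    have h3 : (∫ t, ‖(F u) t‖ ^ p) + (∫ t, ‖(F v) t‖ ^ p)
        ≤ N ^ p * ((∫ t, ‖u t‖ ^ p) + ∫ t, ‖v t‖ ^ p) := by
      have := add_le_add (hFpow u) (hFpow v); linarith [this]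
    calc (∫ t, ‖(complexify (⇑F) f) t‖ ^ p)
        ≤ 2 ^ (p/2 - 1) * ((∫ t, ‖(F u) t‖ ^ p) + ∫ t, ‖(F v) t‖ ^ p) := hB
      _ ≤ 2 ^ (p/2 - 1) * (N ^ p * ((∫ t, ‖u t‖ ^ p) + ∫ t, ‖v t‖ ^ p)) :=
          mul_le_mul_of_nonneg_left h3 h2pos
      _ ≤ 2 ^ (p/2 - 1) * (N ^ p * ∫ t, ‖f t‖ ^ p) := by
          exact mul_le_mul_of_nonneg_left (mul_le_mul_of_nonneg_left hC hNp) h2pos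
      _ = 2 ^ (p/2 - 1) * N ^ p * ∫ t, ‖f t‖ ^ p := by ring
  -- take 1/p-th powers
  show (∫ t, ‖(complexify (⇑F) f) t‖ ^ p) ^ (1/p) ≤ _ * N * (∫ t, ‖f t‖ ^ p) ^ (1/p)
  have hfin := Real.rpow_le_rpow (hInnC _) hmain (by positivity : (0:ℝ) ≤ 1/p)
  rw [Real.mul_rpow (by positivity) (hInnC f), Real.mul_rpow h2pos hNp,
    ← Real.rpow_mul (by norm_num : (0:ℝ) ≤ 2), ← Real.rpow_mul hN,
    show (p/2 - 1) * (1/p) = 1/2 - 1/p by field_simp,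
    show p * (1/p) = 1 by field_simp, Real.rpow_one] at hfin
  exact hfin
end

section
/- Let k ≥ 1 and 1 ≤ p < ∞. Let F, D : C([0,1]^k, ℝ) → C([0,1]^k, ℝ) be linear maps and a ≥ 0 be such that ‖Fu − u‖_{L^p} ≤ a·‖Fu − Du‖_{L^p} for every real-valued continuous u on [0,1]^k. Define the complexifications F_ℂ(f) = F(Re f) + i·F(Im f) and D_ℂ(f) = D(Re f) + i·D(Im f) on C([0,1]^k, ℂ). Then for every f ∈ C([0,1]^k, ℂ), ‖F_ℂ(f) − f‖_{L^p} ≤ 2^{1/2 + 1/p} · a · ‖F_ℂ(f) − D_ℂ(f)‖_{L^p}. (Paper's Lemma 4.8, with a = ‖α‖∞ and M = 2^{1/2+1/p}.) -/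
open MeasureTheory

lemma cube_integrable {k : ℕ} {E : Type*} [NormedAddCommGroup E] {p : ℝ} (hp : 1 ≤ p)
    {g : (Fin k → Set.Icc (0:ℝ) 1) → E} (hg : Continuous g) :
    Integrable (fun t => ‖g t‖ ^ p) := by
  apply Continuous.integrable_of_hasCompactSupport
  · exact (continuous_norm.comp hg).rpow_const (fun t => Or.inr (by positivity))
  · exact HasCompactSupport.of_compactSpace _

lemma norm_rpow_le_aux (z : ℂ) {p : ℝ} (hp : 1 ≤ p) :
    ‖z‖ ^ p ≤ 2 ^ (p/2) * (|z.re| ^ p + |z.im| ^ p) := by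
  set m := max |z.re| |z.im| with hm
  have hm0 : 0 ≤ m := le_trans (abs_nonneg _) (le_max_left _ _)
  have h1 : ‖z‖ ≤ Real.sqrt 2 * m := by
    rw [Complex.norm_def, ← Real.sqrt_sq hm0, ← Real.sqrt_mul (by norm_num)]
    apply Real.sqrt_le_sqrt
    have h2 : |z.re| ≤ m := le_max_left _ _
    have h3 : |z.im| ≤ m := le_max_right _ _
    have := sq_abs z.re
    have := sq_abs z.im
    rw [Complex.normSq_apply]
    nlinarith [abs_nonneg z.re, abs_nonneg z.im]
  have hp0 : 0 ≤ p := le_trans zero_le_one hp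
  calc ‖z‖ ^ p ≤ (Real.sqrt 2 * m) ^ p := Real.rpow_le_rpow (norm_nonneg z) h1 hp0
    _ = 2 ^ (p/2) * m ^ p := by
        rw [Real.mul_rpow (Real.sqrt_nonneg 2) hm0, Real.sqrt_eq_rpow,
          ← Real.rpow_mul (by norm_num)]
        ring_nf
    _ ≤ 2 ^ (p/2) * (|z.re| ^ p + |z.im| ^ p) := by
        apply mul_le_mul_of_nonneg_left _ (Real.rpow_nonneg (by norm_num) _)
        rcases max_cases |z.re| |z.im| with ⟨h, _⟩ | ⟨h, _⟩ <;> rw [hm, h]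
        · exact le_add_of_nonneg_right (Real.rpow_nonneg (abs_nonneg _) _)
        · exact le_add_of_nonneg_left (Real.rpow_nonneg (abs_nonneg _) _)

/-- Paper's Lemma 4.8 (with `a = ‖α‖∞` and `M = 2^{1/2+1/p}`): the complexified operators
satisfy `‖F_ℂ(f) − f‖_{L^p} ≤ 2^{1/2+1/p}·a·‖F_ℂ(f) − D_ℂ(f)‖_{L^p}`. -/
theorem complexification_perturbation (k : ℕ) (hk : 1 ≤ k)
    (p : ℝ) (hp : 1 ≤ p)
    (F D : C((Fin k → Set.Icc (0:ℝ) 1), ℝ) →ₗ[ℝ] C((Fin k → Set.Icc (0:ℝ) 1), ℝ))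
    (a : ℝ) (ha : 0 ≤ a)
    (hFD : ∀ u : C((Fin k → Set.Icc (0:ℝ) 1), ℝ),
      cubeLpNorm p (⇑(F u) - ⇑u) ≤ a * cubeLpNorm p (⇑(F u) - ⇑(D u))) :
    ∀ f : C((Fin k → Set.Icc (0:ℝ) 1), ℂ),
      cubeLpNorm p (⇑(complexify (⇑F) f) - ⇑f) ≤
        2 ^ ((1:ℝ)/2 + 1/p) * a *
          cubeLpNorm p (⇑(complexify (⇑F) f) - ⇑(complexify (⇑D) f)) := by
  intro f
  have hp0 : (0:ℝ) < p := lt_of_lt_of_le one_pos hp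
  have hpnn : (0:ℝ) ≤ p := hp0.le
  set u := reCM f with hu
  set v := imCM f with hv
  set g1 : (Fin k → Set.Icc (0:ℝ) 1) → ℂ := ⇑(complexify (⇑F) f) - ⇑f with hg1
  set g2 : (Fin k → Set.Icc (0:ℝ) 1) → ℂ := ⇑(complexify (⇑F) f) - ⇑(complexify (⇑D) f) with hg2
  have hg1c : Continuous g1 := (complexify (⇑F) f).continuous.sub f.continuous
  have hg2c : Continuous g2 := (complexify (⇑F) f).continuous.sub (complexify (⇑D) f).continuous
  have hre1 : ∀ t, (g1 t).re = (⇑(F u) - ⇑u) t := by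
    intro t
    simp [hg1, complexify, ofRealCM, reCM, imCM, hu, smul_eq_mul, Complex.add_re,
      Complex.mul_re]
  have him1 : ∀ t, (g1 t).im = (⇑(F v) - ⇑v) t := by
    intro t
    simp [hg1, complexify, ofRealCM, reCM, imCM, hv, smul_eq_mul, Complex.add_im,
      Complex.mul_im]
  have hre2 : ∀ t, (g2 t).re = (⇑(F u) - ⇑(D u)) t := by
    intro t
    simp [hg2, complexify, ofRealCM, reCM, imCM, hu, smul_eq_mul]
  have him2 : ∀ t, (g2 t).im = (⇑(F v) - ⇑(D v)) t := by
    intro t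
    simp [hg2, complexify, ofRealCM, reCM, imCM, hv, smul_eq_mul]
  -- integrals
  set I1 := ∫ t, ‖g1 t‖ ^ p with hI1
  set E := ∫ t, ‖g2 t‖ ^ p with hE
  set A := ∫ t, ‖(⇑(F u) - ⇑u) t‖ ^ p with hA
  set B := ∫ t, ‖(⇑(F v) - ⇑v) t‖ ^ p with hB
  set C := ∫ t, ‖(⇑(F u) - ⇑(D u)) t‖ ^ p with hC
  set Dv := ∫ t, ‖(⇑(F v) - ⇑(D v)) t‖ ^ p with hDv
  have hFuc : Continuous (⇑(F u) - ⇑u) := (F u).continuous.sub u.continuous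
  have hFvc : Continuous (⇑(F v) - ⇑v) := (F v).continuous.sub v.continuous
  have hFDuc : Continuous (⇑(F u) - ⇑(D u)) := (F u).continuous.sub (D u).continuous
  have hFDvc : Continuous (⇑(F v) - ⇑(D v)) := (F v).continuous.sub (D v).continuous
  have hEnn : 0 ≤ E := integral_nonneg fun t => Real.rpow_nonneg (norm_nonneg _) _
  have hCnn : 0 ≤ C := integral_nonneg fun t => Real.rpow_nonneg (norm_nonneg _) _
  have hDvnn : 0 ≤ Dv := integral_nonneg fun t => Real.rpow_nonneg (norm_nonneg _) _
  have hAnn : 0 ≤ A := integral_nonneg fun t => Real.rpow_nonneg (norm_nonneg _) _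
  have hBnn : 0 ≤ B := integral_nonneg fun t => Real.rpow_nonneg (norm_nonneg _) _
  -- step 1 : I1 ≤ 2^(p/2) * (A + B)
  have step1 : I1 ≤ 2 ^ (p/2) * (A + B) := by
    have hpt : ∀ t, ‖g1 t‖ ^ p ≤
        2 ^ (p/2) * (‖(⇑(F u) - ⇑u) t‖ ^ p + ‖(⇑(F v) - ⇑v) t‖ ^ p) := by
      intro t
      have := norm_rpow_le_aux (g1 t) hp
      rwa [hre1 t, him1 t, ← Real.norm_eq_abs, ← Real.norm_eq_abs] at this
    calc I1 ≤ ∫ t, 2 ^ (p/2) * (‖(⇑(F u) - ⇑u) t‖ ^ p + ‖(⇑(F v) - ⇑v) t‖ ^ p) := by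
          apply integral_mono (cube_integrable hp hg1c) _ hpt
          exact ((cube_integrable hp hFuc).add (cube_integrable hp hFvc)).const_mul _
      _ = 2 ^ (p/2) * (A + B) := by
          rw [integral_const_mul, integral_add (cube_integrable hp hFuc)
            (cube_integrable hp hFvc)]
  -- step 2 : x^(1/p) ≤ a * y^(1/p) → x ≤ a^p * y
  have pow_step : ∀ x y : ℝ, 0 ≤ x → 0 ≤ y → x ^ (1/p) ≤ a * y ^ (1/p) → x ≤ a ^ p * y := by
    intro x y hx hy h
    have h2 := Real.rpow_le_rpow (Real.rpow_nonneg hx _) h hpnn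
    have e : (1/p) * p = 1 := by field_simp
    rw [← Real.rpow_mul hx, Real.mul_rpow ha (Real.rpow_nonneg hy _),
      ← Real.rpow_mul hy, e, Real.rpow_one, Real.rpow_one] at h2
    exact h2
  have hAC : A ≤ a ^ p * C := by
    have := hFD u
    simp only [cubeLpNorm] at this
    exact pow_step _ _ hAnn hCnn this
  have hBD : B ≤ a ^ p * Dv := by
    have := hFD v
    simp only [cubeLpNorm] at this
    exact pow_step _ _ hBnn hDvnn this
  -- step 3 : C ≤ E, Dv ≤ E
  have hCE : C ≤ E := by
    apply integral_mono (cube_integrable hp hFDuc) (cube_integrable hp hg2c)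
    intro t
    apply Real.rpow_le_rpow (norm_nonneg _) _ hpnn
    rw [← hre2 t, Real.norm_eq_abs]
    exact Complex.abs_re_le_norm _
  have hDE : Dv ≤ E := by
    apply integral_mono (cube_integrable hp hFDvc) (cube_integrable hp hg2c)
    intro t
    apply Real.rpow_le_rpow (norm_nonneg _) _ hpnn
    rw [← him2 t, Real.norm_eq_abs]
    exact Complex.abs_im_le_norm _
  -- combine
  have h2p : (0:ℝ) < 2 ^ (p/2) := Real.rpow_pos_of_pos (by norm_num) _
  have hap : 0 ≤ a ^ p := Real.rpow_nonneg ha _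
  have key : I1 ≤ 2 ^ (p/2 + 1) * a ^ p * E := by
    have : (2:ℝ) ^ (p/2 + 1) = 2 ^ (p/2) * 2 := by
      rw [Real.rpow_add (by norm_num), Real.rpow_one]
    rw [this]
    nlinarith [mul_le_mul_of_nonneg_left hCE hap, mul_le_mul_of_nonneg_left hDE hap]
  -- take 1/p powers
  have hI1nn : 0 ≤ I1 := integral_nonneg fun t => Real.rpow_nonneg (norm_nonneg _) _
  simp only [cubeLpNorm]
  rw [← hI1, ← hE]
  calc I1 ^ (1/p) ≤ (2 ^ (p/2 + 1) * a ^ p * E) ^ (1/p) :=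
        Real.rpow_le_rpow hI1nn key (by positivity)
    _ = 2 ^ ((1:ℝ)/2 + 1/p) * a * E ^ (1/p) := by
        rw [Real.mul_rpow (by positivity) hEnn, Real.mul_rpow (by positivity) hap,
          ← Real.rpow_mul (by norm_num : (0:ℝ) ≤ 2), ← Real.rpow_mul ha]
        have e2 : (p/2 + 1) * (1/p) = 1/2 + 1/p := by field_simp
        have e3 : p * (1/p) = 1 := by field_simp
        rw [e2, e3, Real.rpow_one]
end

section
/- Let k ≥ 1 and 1 ≤ p < ∞. Let F and D be bounded linear operators on the complex Banach space L^p([0,1]^k, ℂ) (with Lebesgue measure), and let c ∈ [0,1) be such that ‖Ff − f‖_{L^p} ≤ c·‖Ff − Df‖_{L^p} for every f ∈ L^p([0,1]^k, ℂ). Then: (i) ‖Ff − f‖_{L^p} ≤ (c·‖Id − D‖/(1−c))·‖f‖_{L^p} for every f, so that the operator norm satisfies ‖F‖ ≤ 1 + c·‖Id − D‖/(1−c); and (ii) if moreover c·‖D‖ < 1, then (1 − c·‖D‖)·‖f‖_{L^p} ≤ (1 + c)·‖Ff‖_{L^p} for every f, F is injective, and the range of F is a closed subspace of L^p([0,1]^k,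 ℂ). (Paper's Theorem 4.10, first and third items, for the extended fractal operator with c = M‖α‖∞.) -/
open MeasureTheory
open scoped ENNReal

set_option maxHeartbeats 1000000 in
/-- Paper's Theorem 4.10 (first and third items) for the extended fractal operator
`F = 𝓕̄^α_ℂ` on `L^p([0,1]^k, ℂ)`, with `c = M‖α‖∞ < 1`. -/
theorem extended_fractal_operator_Lp (k : ℕ) (hk : 1 ≤ k)
    (p : ℝ≥0∞) [Fact (1 ≤ p)] (hp : p ≠ ⊤)
    (F D : Lp ℂ p (volume : Measure (Fin k → Set.Icc (0:ℝ) 1)) →L[ℂ]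
      Lp ℂ p (volume : Measure (Fin k → Set.Icc (0:ℝ) 1)))
    (c : ℝ) (hc : c ∈ Set.Ico (0:ℝ) 1)
    (hFD : ∀ f, ‖F f - f‖ ≤ c * ‖F f - D f‖) :
    (∀ f, ‖F f - f‖ ≤
      c * ‖ContinuousLinearMap.id ℂ (Lp ℂ p (volume : Measure (Fin k → Set.Icc (0:ℝ) 1))) - D‖
        / (1 - c) * ‖f‖) ∧
    ‖F‖ ≤ 1 +
      c * ‖ContinuousLinearMap.id ℂ (Lp ℂ p (volume : Measure (Fin k → Set.Icc (0:ℝ) 1))) - D‖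
        / (1 - c) ∧
    (c * ‖D‖ < 1 →
      (∀ f, (1 - c * ‖D‖) * ‖f‖ ≤ (1 + c) * ‖F f‖) ∧
      Function.Injective F ∧
      IsClosed (Set.range F)) := by
  obtain ⟨hc0, hc1⟩ := hc
  set X := Lp ℂ p (volume : Measure (Fin k → Set.Icc (0:ℝ) 1))
  set I : X →L[ℂ] X := ContinuousLinearMap.id ℂ X
  have h1c : (0:ℝ) < 1 - c := by linarith
  -- main estimate (i)
  have key : ∀ f : X, ‖F f - f‖ ≤ c * ‖I - D‖ / (1 - c) * ‖f‖ := by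
    intro f
    have h1 : ‖F f - f‖ ≤ c * ‖F f - D f‖ := hFD f
    have h2 : ‖F f - D f‖ ≤ ‖F f - f‖ + ‖f - D f‖ := by
      have := norm_sub_le_norm_sub_add_norm_sub (F f) f (D f)
      simpa using this
    have h3 : ‖f - D f‖ ≤ ‖I - D‖ * ‖f‖ := by
      have := (I - D).le_opNorm f
      simpa [I, ContinuousLinearMap.sub_apply] using this
    have h4 : (1 - c) * ‖F f - f‖ ≤ c * (‖I - D‖ * ‖f‖) := by nlinarith
    rw [div_mul_eq_mul_div, le_div_iff₀ h1c, mul_comm (‖F f - f‖)]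
    nlinarith
  refine ⟨key, ?_, ?_⟩
  · apply ContinuousLinearMap.opNorm_le_bound
    · have hIDnn : 0 ≤ ‖I - D‖ := norm_nonneg _
      positivity
    · intro f
      have := key f
      have h5 : ‖F f‖ ≤ ‖F f - f‖ + ‖f‖ := by
        have := norm_sub_le (F f - f) (-f)
        simpa [sub_neg_eq_add, sub_add_cancel] using norm_add_le (F f - f) f
      calc ‖F f‖ ≤ ‖F f - f‖ + ‖f‖ := h5
        _ ≤ c * ‖I - D‖ / (1 - c) * ‖f‖ + ‖f‖ := by linarith
        _ = (1 + c * ‖I - D‖ / (1 - c)) * ‖f‖ := by ring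
  · intro hcD
    have below : ∀ f : X, (1 - c * ‖D‖) * ‖f‖ ≤ (1 + c) * ‖F f‖ := by
      intro f
      have h1 : ‖F f - f‖ ≤ c * ‖F f - D f‖ := hFD f
      have h2 : ‖F f - D f‖ ≤ ‖F f‖ + ‖D f‖ := norm_sub_le _ _
      have h3 : ‖D f‖ ≤ ‖D‖ * ‖f‖ := D.le_opNorm f
      have h4 : ‖f‖ ≤ ‖F f‖ + ‖F f - f‖ := by
        have := norm_sub_le (F f) (F f - f)
        simpa using this
      nlinarith
    refine ⟨below, ?_, ?_⟩
    · intro f g hfg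
      have h0 : F (f - g) = 0 := by simp [map_sub, hfg]
      have := below (f - g)
      rw [h0] at this
      simp only [norm_zero, mul_zero] at this
      have : ‖f - g‖ ≤ 0 := by nlinarith
      have : f - g = 0 := norm_eq_zero.mp (le_antisymm this (norm_nonneg _))
      exact sub_eq_zero.mp this
    · have hK : (0:ℝ) < 1 - c * ‖D‖ := by linarith
      have anti : AntilipschitzWith (NNReal.mk ((1 + c) / (1 - c * ‖D‖)) (by positivity)) F := by
        refine AntilipschitzWith.of_le_mul_dist fun f g => ?_
        rw [dist_eq_norm, dist_eq_norm, NNReal.coe_mk, div_mul_eq_mul_div,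
          le_div_iff₀ hK, ← map_sub F f g, mul_comm]
        exact below (f - g)
      exact anti.isClosed_range F.uniformContinuous
end

section
/- Let k ≥ 1. Let F and D be bounded linear operators on the complex Hilbert space L^2([0,1]^k, ℂ) (with Lebesgue measure), and let c ∈ [0,1) be such that c·‖D‖ < 1 and ‖Ff − f‖_{L^2} ≤ c·‖Ff − Df‖_{L^2} for every f ∈ L^2([0,1]^k, ℂ). Then the range of F is closed and L^2([0,1]^k, ℂ) decomposes as the orthogonal direct sum of the range of F and the kernel of the adjoint F*: every h ∈ L^2([0,1]^k, ℂ) can be written uniquely as h = Fu + v with v ∈ ker(F*), and the range of F is orthogonal to ker(F*). (Paper's Theorem 4.10, last item, for the extended fractal operator with c = ‖α‖∞ < ‖D‖⁻¹.) -/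
open MeasureTheory

set_option maxHeartbeats 1000000
set_option synthInstance.maxHeartbeats 400000

/-- Paper's Theorem 4.10 (last item): for the extended fractal operator `F` on the Hilbert
space `L^2([0,1]^k, ℂ)` with `c·‖D‖ < 1`, the range of `F` is closed and
`L^2 = Range(F) ⊕ Ker(F*)` as an orthogonal direct sum. -/
theorem extended_fractal_operator_L2_decomposition (k : ℕ) (hk : 1 ≤ k)
    (F D : Lp ℂ 2 (volume : Measure (Fin k → Set.Icc (0:ℝ) 1)) →L[ℂ]
      Lp ℂ 2 (volume : Measure (Fin k → Set.Icc (0:ℝ) 1)))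
    (c : ℝ) (hc : c ∈ Set.Ico (0:ℝ) 1) (hcD : c * ‖D‖ < 1)
    (hFD : ∀ f, ‖F f - f‖ ≤ c * ‖F f - D f‖) :
    IsClosed (Set.range F) ∧
    (∀ u v, v ∈ LinearMap.ker (ContinuousLinearMap.adjoint F).toLinearMap →
      inner ℂ (F u) v = (0 : ℂ)) ∧
    (∀ h, ∃ u v, v ∈ LinearMap.ker (ContinuousLinearMap.adjoint F).toLinearMap ∧ h = F u + v ∧
      ∀ u' v', v' ∈ LinearMap.ker (ContinuousLinearMap.adjoint F).toLinearMap → h = F u' + v' →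
        F u' = F u ∧ v' = v) := by
  have hc0 : (0:ℝ) ≤ c := hc.1
  have hden : (0:ℝ) < 1 - c * ‖D‖ := by linarith
  -- F is bounded below
  have key : ∀ f, ‖f‖ ≤ ((1 + c) / (1 - c * ‖D‖)) * ‖F f‖ := by
    intro f
    have h1 := hFD f
    have h2 : ‖F f - D f‖ ≤ ‖F f‖ + ‖D‖ * ‖f‖ := by
      calc ‖F f - D f‖ ≤ ‖F f‖ + ‖D f‖ := norm_sub_le _ _
        _ ≤ ‖F f‖ + ‖D‖ * ‖f‖ := by gcongr; exact D.le_opNorm f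
    have h3 : ‖f‖ - ‖F f‖ ≤ ‖F f - f‖ := by
      have := abs_norm_sub_norm_le (F f) f
      rw [abs_le] at this
      linarith
    have h4 : (1 - c * ‖D‖) * ‖f‖ ≤ (1 + c) * ‖F f‖ := by
      nlinarith [mul_le_mul_of_nonneg_left h2 hc0]
    rw [div_mul_eq_mul_div, le_div_iff₀ hden]
    linarith
  have hanti : AntilipschitzWith ((1 + c) / (1 - c * ‖D‖)).toNNReal F :=
    ContinuousLinearMap.antilipschitz_of_bound F fun x => by
    rw [Real.coe_toNNReal _ (div_nonneg (by linarith : (0:ℝ) ≤ 1 + c) hden.le)]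
    exact key x
  have hclosed : IsClosed (Set.range F) := hanti.isClosed_range F.uniformContinuous
  -- orthogonality
  have horth : ∀ u v, v ∈ LinearMap.ker (ContinuousLinearMap.adjoint F).toLinearMap →
      inner ℂ (F u) v = (0 : ℂ) := by
    intro u v hv
    have hv0 : ContinuousLinearMap.adjoint F v = 0 := hv
    rw [← ContinuousLinearMap.adjoint_inner_right, hv0, inner_zero_right]
  refine ⟨hclosed, horth, ?_⟩
  intro h
  set K : Submodule ℂ _ := LinearMap.range F.toLinearMap with hK
  have hKclosed : IsClosed (K : Set (Lp ℂ 2 (volume : Measure (Fin k → Set.Icc (0:ℝ) 1)))) := by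
    have he : (K : Set (Lp ℂ 2 (volume : Measure (Fin k → Set.Icc (0:ℝ) 1)))) = Set.range F := by
      ext x; simp [hK, LinearMap.mem_range]
    rw [he]; exact hclosed
  haveI : CompleteSpace K := hKclosed.completeSpace_coe
  obtain ⟨y, hy, z, hz, hyz⟩ := K.exists_add_mem_mem_orthogonal h
  obtain ⟨u, hu : F u = y⟩ := hy
  have hzker : z ∈ LinearMap.ker (ContinuousLinearMap.adjoint F).toLinearMap := by
    rw [LinearMap.mem_ker]
    have : ∀ w, inner ℂ w (ContinuousLinearMap.adjoint F z) = (0:ℂ) := by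
      intro w
      rw [ContinuousLinearMap.adjoint_inner_right]
      exact hz (F w) ⟨w, rfl⟩
    have := this (ContinuousLinearMap.adjoint F z)
    exact inner_self_eq_zero.mp this
  refine ⟨u, z, hzker, by rw [hyz, hu], ?_⟩
  intro u' v' hv' hh
  have hdiff : F u' - F u = z - v' := by
    have h5 : F u + z = F u' + v' := by rw [hu, ← hyz]; exact hh
    rw [sub_eq_sub_iff_add_eq_add, ← h5]; abel
  have hzero : F u' - F u = 0 := by
    have hmem : F u' - F u ∈ LinearMap.ker (ContinuousLinearMap.adjoint F).toLinearMap := by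
      rw [hdiff]
      exact Submodule.sub_mem _ hzker hv'
    have h1 : inner ℂ (F u' - F u) (F u' - F u) = (0:ℂ) := by
      have ha := horth u' _ hmem
      have hb := horth u _ hmem
      rw [inner_sub_left, ha, hb, sub_zero]
    exact inner_self_eq_zero.mp h1
  constructor
  · exact sub_eq_zero.mp hzero
  · have : z - v' = 0 := by rw [← hdiff, hzero]
    have := sub_eq_zero.mp this
    exact this.symm
end
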